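/- arXiv:1507.05008 — 3 statements merged into one kernel-verified Lean document; each statement's English description precedes it below -/
import Mathlib

section
/- Let X be a nonnegative random variable with finite mean E[X] and with P(X > t) = L(t)t^{-γ} for a slowly varying function L and 1 < γ < 2. Then as t → ∞, E[X]/t - 1 + E[exp(-X/t)] ∼ C·L(t)·t^{-γ} for some positive constant C depending only on γ (i.e., the left-hand side is regularly varying in t with index -γ). -/
open MeasureTheory Filter
open Set

/-- `L` is slowly varying at infinity. -/
def SlowlyVarying (L : ℝ → ℝ) : Prop :=
  ∀ t : ℝ, 0 < t → Tendsto (fun x => L (t * x) / L x) atTop (nhds 1)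

lemma exists_pow_two_bracket {s : ℝ} (hs : 1 ≤ s) :
    ∃ n : ℕ, (2:ℝ)^n ≤ s ∧ s < 2^(n+1) := by
  have hs0 : (0:ℝ) < s := lt_of_lt_of_le one_pos hs
  have hlog : 0 ≤ Real.logb 2 s := Real.logb_nonneg one_lt_two hs
  refine ⟨⌊Real.logb 2 s⌋₊, ?_, ?_⟩
  · have h1 : (2:ℝ) ^ (⌊Real.logb 2 s⌋₊ : ℝ) ≤ 2 ^ Real.logb 2 s :=
      Real.rpow_le_rpow_of_exponent_le one_le_two (Nat.floor_le hlog)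
    rw [Real.rpow_natCast] at h1
    rwa [Real.rpow_logb two_pos (by norm_num) hs0] at h1
  · have h2 : Real.logb 2 s < (⌊Real.logb 2 s⌋₊ : ℝ) + 1 := Nat.lt_floor_add_one _
    have h3 : (2:ℝ) ^ Real.logb 2 s < 2 ^ ((⌊Real.logb 2 s⌋₊ : ℝ) + 1) :=
      Real.rpow_lt_rpow_of_exponent_lt one_lt_two h2
    rw [Real.rpow_logb two_pos (by norm_num) hs0] at h3
    calc s < 2 ^ ((⌊Real.logb 2 s⌋₊ : ℝ) + 1) := h3
    _ = 2 ^ (⌊Real.logb 2 s⌋₊ + 1) := by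
        rw [← Real.rpow_natCast 2 (⌊Real.logb 2 s⌋₊ + 1)]; push_cast; ring_nf

lemma integral_one_sub_exp_neg (x : ℝ) :
    ∫ s in (0:ℝ)..x, (1 - Real.exp (-s)) = x - 1 + Real.exp (-x) := by
  have h1 : IntervalIntegrable (fun _ : ℝ => (1:ℝ)) volume 0 x := intervalIntegrable_const
  have h2 : IntervalIntegrable (fun s : ℝ => Real.exp (-s)) volume 0 x :=
    (Real.continuous_exp.comp continuous_neg).intervalIntegrable 0 x
  rw [intervalIntegral.integral_sub h1 h2]
  have : (∫ s in (0:ℝ)..x, Real.exp (-s)) = ∫ s in (-x)..(-(0:ℝ)), Real.exp s :=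
    intervalIntegral.integral_comp_neg Real.exp
  rw [this, integral_exp, intervalIntegral.integral_const]
  simp; ring

lemma G_nonneg {x : ℝ} : 0 ≤ x - 1 + Real.exp (-x) := by
  have := Real.add_one_le_exp (-x); linarith

lemma pow_rpow_comm (y : ℝ) (n : ℕ) : ((2:ℝ)^y)^n = ((2:ℝ)^n)^y := by
  rw [← Real.rpow_natCast ((2:ℝ)^y) n, ← Real.rpow_natCast (2:ℝ) n,
    ← Real.rpow_mul (by norm_num), ← Real.rpow_mul (by norm_num), mul_comm]

lemma one_sub_exp_nonneg {s : ℝ} (hs : 0 ≤ s) : 0 ≤ 1 - Real.exp (-s) := by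
  have : Real.exp (-s) ≤ Real.exp 0 := Real.exp_le_exp.2 (by linarith)
  rw [Real.exp_zero] at this; linarith

lemma one_sub_exp_le_self {s : ℝ} : 1 - Real.exp (-s) ≤ s := by
  have := Real.add_one_le_exp (-s); linarith

set_option maxHeartbeats 1000000 in
/-- Tauberian theorem: if `X ≥ 0` has finite mean and regularly varying tail
`P(X > t) = L(t) t^{-γ}` with `1 < γ < 2`, then as `t → ∞`
`E[X]/t - 1 + E[e^{-X/t}] ∼ C · L(t) · t^{-γ}` for some constant `C > 0`. -/
theorem tauberian_laplace_asymptotics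
    {Ω : Type*} [MeasurableSpace Ω] (P : Measure Ω) [IsProbabilityMeasure P]
    (X : Ω → ℝ) (hX : Measurable X) (hnn : ∀ ω, 0 ≤ X ω)
    (hint : Integrable X P)
    (L : ℝ → ℝ) (hLpos : ∀ t : ℝ, 0 < t → 0 < L t) (hSV : SlowlyVarying L)
    (γ : ℝ) (hγ1 : 1 < γ) (hγ2 : γ < 2)
    (htail : ∀ t : ℝ, 0 < t → (P {ω | t < X ω}).toReal = L t * t ^ (-γ)) :
    ∃ C : ℝ, 0 < C ∧
      Tendsto (fun t : ℝ =>
          ((∫ ω, X ω ∂P) / t - 1 + ∫ ω, Real.exp (-X ω / t) ∂P) /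
            (C * L t * t ^ (-γ))) atTop (nhds 1) := by
  set T : ℝ → ℝ := fun u => (P {ω | u < X ω}).toReal with hTdef
  have hTanti : Antitone T := by
    intro u v huv
    exact ENNReal.toReal_le_toReal (measure_ne_top _ _) (measure_ne_top _ _) |>.2
      (measure_mono (fun ω h => lt_of_le_of_lt huv h))
  have hTm : Measurable T := hTanti.measurable
  have hT1 : ∀ u, T u ≤ 1 := fun u => by
    simpa using ENNReal.toReal_le_toReal (measure_ne_top _ _) (by simp) |>.2
      (prob_le_one (μ := P) (s := {ω | u < X ω}))
  have hTnn : ∀ u, 0 ≤ T u := fun u => ENNReal.toReal_nonneg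
  have hTeq : ∀ t : ℝ, 0 < t → T t = L t * t ^ (-γ) := htail
  have hTpos : ∀ t : ℝ, 0 < t → 0 < T t := by
    intro t ht; rw [hTeq t ht]
    exact mul_pos (hLpos t ht) (Real.rpow_pos_of_pos ht _)
  -- exponents
  set p : ℝ := (1+γ)/2 with hpdef
  set q : ℝ := (2+γ)/2 with hqdef
  have hp1 : 1 < p := by rw [hpdef]; linarith
  have hpγ : p < γ := by rw [hpdef]; linarith
  have hγq : γ < q := by rw [hqdef]; linarith
  have hq2 : q < 2 := by rw [hqdef]; linarith
  -- ratio limit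
  have hratio : ∀ s : ℝ, 0 < s →
      Tendsto (fun t => T (t*s) / T t) atTop (nhds (s ^ (-γ))) := by
    intro s hs
    have h1 := (hSV s hs).mul (tendsto_const_nhds (x := s ^ (-γ)))
    rw [one_mul] at h1
    apply h1.congr'
    filter_upwards [eventually_gt_atTop 0] with t ht
    have hts : 0 < t * s := mul_pos ht hs
    have e1 : T (t*s) = L (s*t) * (t ^ (-γ) * s ^ (-γ)) := by
      rw [hTeq _ hts, Real.mul_rpow ht.le hs.le, mul_comm t s]
    rw [e1, hTeq _ ht]
    have hL := (hLpos t ht).ne'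
    have htp := (Real.rpow_pos_of_pos ht (-γ)).ne'
    field_simp
  -- doubling constants
  have h2q : (2:ℝ) ^ (-q) < 2 ^ (-γ) :=
    Real.rpow_lt_rpow_of_exponent_lt one_lt_two (by linarith)
  have h2p : (2:ℝ) ^ (-γ) < 2 ^ (-p) :=
    Real.rpow_lt_rpow_of_exponent_lt one_lt_two (by linarith)
  obtain ⟨u₀, hu₀⟩ : ∃ u₀ : ℝ, ∀ u, u₀ ≤ u →
      1 ≤ u ∧ (2:ℝ)^(-q) * T u ≤ T (u*2) ∧ T (u*2) ≤ (2:ℝ)^(-p) * T u := by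
    have hev := (hratio 2 two_pos).eventually (Ioo_mem_nhds h2q h2p)
    have := (eventually_ge_atTop (1:ℝ)).and hev
    rw [eventually_atTop] at this
    obtain ⟨a, ha⟩ := this
    refine ⟨max a 1, fun u hu => ?_⟩
    obtain ⟨h1, h2, h3⟩ := ha u (le_trans (le_max_left a 1) hu)
    have hu0 : 0 < u := lt_of_lt_of_le one_pos h1
    have hT0 := hTpos u hu0
    refine ⟨h1, ?_, ?_⟩
    · have := (lt_div_iff₀ hT0).1 h2; linarith
    · have := (div_lt_iff₀ hT0).1 h3; linarith
  have hu₀1 : 1 ≤ u₀ := (hu₀ u₀ le_rfl).1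
  have hu₀0 : 0 < u₀ := lt_of_lt_of_le one_pos hu₀1
  -- iterated doubling
  have hiter : ∀ u, u₀ ≤ u → ∀ n : ℕ,
      T (u * 2^n) ≤ ((2:ℝ)^(-p))^n * T u ∧ ((2:ℝ)^(-q))^n * T u ≤ T (u * 2^n) := by
    intro u hu n
    have hu0 : 0 < u := lt_of_lt_of_le (lt_of_lt_of_le one_pos hu₀1) hu
    induction n with
    | zero => simp
    | succ n ih =>
      have hun : u₀ ≤ u * 2^n :=
        le_trans hu (le_mul_of_one_le_right hu0.le (one_le_pow₀ one_le_two))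
      obtain ⟨_, hlo, hhi⟩ := hu₀ _ hun
      have he : u * 2^(n+1) = (u * 2^n) * 2 := by ring
      constructor
      · calc T (u * 2^(n+1)) = T ((u * 2^n) * 2) := by rw [he]
          _ ≤ (2:ℝ)^(-p) * T (u * 2^n) := hhi
          _ ≤ (2:ℝ)^(-p) * (((2:ℝ)^(-p))^n * T u) := by
              have := ih.1
              exact mul_le_mul_of_nonneg_left this (Real.rpow_nonneg (by norm_num) _)
          _ = ((2:ℝ)^(-p))^(n+1) * T u := by ring
      · calc ((2:ℝ)^(-q))^(n+1) * T u = (2:ℝ)^(-q) * (((2:ℝ)^(-q))^n * T u) := by ring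
          _ ≤ (2:ℝ)^(-q) * T (u * 2^n) :=
              mul_le_mul_of_nonneg_left ih.2 (Real.rpow_nonneg (by norm_num) _)
          _ ≤ T ((u * 2^n) * 2) := hlo
          _ = T (u * 2^(n+1)) := by rw [he]
  -- upper power bound for s ≥ 1
  have hup : ∀ t s : ℝ, u₀ ≤ t → 1 ≤ s → T (t*s) ≤ 2^p * s^(-p) * T t := by
    intro t s ht hs
    have ht0 : 0 < t := lt_of_lt_of_le hu₀0 ht
    have hs0 : 0 < s := lt_of_lt_of_le one_pos hs
    obtain ⟨n, hn1, hn2⟩ := exists_pow_two_bracket hs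
    have h1 : T (t*s) ≤ T (t*2^n) := hTanti (by nlinarith)
    have h2 := (hiter t ht n).1
    have h3 : ((2:ℝ)^(-p))^n = ((2:ℝ)^n)^(-p) := pow_rpow_comm _ _
    have hhalf : s/2 ≤ (2:ℝ)^n := by
      have : s < 2^n * 2 := by rw [pow_succ] at hn2; exact hn2
      linarith
    have h4 : ((2:ℝ)^n)^(-p) ≤ (s/2)^(-p) :=
      Real.rpow_le_rpow_of_nonpos (by positivity) hhalf (by linarith)
    have h5 : ((s/2):ℝ)^(-p) = 2^p * s^(-p) := by
      rw [Real.div_rpow hs0.le (by norm_num), Real.rpow_neg (by norm_num : (0:ℝ) ≤ 2),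
        div_eq_mul_inv, inv_inv, mul_comm]
    calc T (t*s) ≤ T (t*2^n) := h1
      _ ≤ ((2:ℝ)^(-p))^n * T t := h2
      _ = ((2:ℝ)^n)^(-p) * T t := by rw [h3]
      _ ≤ (s/2)^(-p) * T t := mul_le_mul_of_nonneg_right h4 (hTnn t)
      _ = 2^p * s^(-p) * T t := by rw [h5]
  -- upper power bound for s ≤ 1 (with t*s ≥ u₀)
  have hsm : ∀ t s : ℝ, 0 < t → 0 < s → s ≤ 1 → u₀ ≤ t*s →
      T (t*s) ≤ 2^q * s^(-q) * T t := by
    intro t s ht hs hs1 hts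
    obtain ⟨n, hn1, hn2⟩ := exists_pow_two_bracket
      (show (1:ℝ) ≤ 2/s by rw [le_div_iff₀ hs]; linarith)
    have hinv : 1/s ≤ (2:ℝ)^n := by
      have : 2/s < 2^n * 2 := by rw [pow_succ] at hn2; exact hn2
      have h2s : 2/s = 2 * (1/s) := by ring
      nlinarith [hs]
    have hge : t ≤ (t*s) * 2^n := by
      have h1 : 1 ≤ s * 2^n := by
        rw [div_le_iff₀ hs] at hinv
        nlinarith
      nlinarith
    have h2 := (hiter (t*s) hts n).2
    have h3 : T ((t*s)*2^n) ≤ T t := hTanti hge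
    have key : ((2:ℝ)^(-q))^n * T (t*s) ≤ T t := le_trans h2 h3
    have hpow : ((2:ℝ)^(-q))^n = ((2:ℝ)^n)^(-q) := pow_rpow_comm _ _
    have h2n : (0:ℝ) < (2:ℝ)^n := by positivity
    have hq0 : (0:ℝ) < q := by linarith
    -- T(ts) ≤ (2^n)^q * T t
    have step : T (t*s) ≤ ((2:ℝ)^n)^q * T t := by
      rw [hpow] at key
      have hne : ((2:ℝ)^n)^(-q) = (((2:ℝ)^n)^q)⁻¹ := by
        rw [Real.rpow_neg h2n.le]
      rw [hne] at key
      have hposq : (0:ℝ) < ((2:ℝ)^n)^q := Real.rpow_pos_of_pos h2n _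
      calc T (t*s) = ((2:ℝ)^n)^q * ((((2:ℝ)^n)^q)⁻¹ * T (t*s)) := by
            field_simp
        _ ≤ ((2:ℝ)^n)^q * T t := mul_le_mul_of_nonneg_left key hposq.le
    have h2nq : ((2:ℝ)^n)^q ≤ (2/s)^q := Real.rpow_le_rpow h2n.le hn1 hq0.le
    have hfin : ((2:ℝ)/s)^q = 2^q * s^(-q) := by
      rw [Real.div_rpow (by norm_num) hs.le, Real.rpow_neg hs.le, div_eq_mul_inv]
    calc T (t*s) ≤ ((2:ℝ)^n)^q * T t := step
      _ ≤ (2/s)^q * T t := mul_le_mul_of_nonneg_right h2nq (hTnn t)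
      _ = 2^q * s^(-q) * T t := by rw [hfin]
  -- polynomial lower bound on T
  have hTlb : ∀ t, u₀ ≤ t → (2*t/u₀)^(-q) * T u₀ ≤ T t := by
    intro t ht
    have ht0 : 0 < t := lt_of_lt_of_le hu₀0 ht
    obtain ⟨n, hn1, hn2⟩ := exists_pow_two_bracket
      (show (1:ℝ) ≤ t/u₀ by rw [le_div_iff₀ hu₀0]; linarith)
    have h1 : T (u₀ * 2^(n+1)) ≤ T t := by
      apply hTanti
      rw [div_lt_iff₀ hu₀0] at hn2
      linarith [hn2]
    have h2 := (hiter u₀ le_rfl (n+1)).2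
    have key : ((2:ℝ)^(-q))^(n+1) * T u₀ ≤ T t := le_trans h2 h1
    refine le_trans ?_ key
    apply mul_le_mul_of_nonneg_right _ (hTnn u₀)
    rw [pow_rpow_comm]
    apply Real.rpow_le_rpow_of_nonpos (by positivity) _ (by linarith)
    have hn1' := (le_div_iff₀ hu₀0).1 hn1
    rw [le_div_iff₀ hu₀0, pow_succ]
    nlinarith
  -- dominating function
  set K : ℝ := 2^p + 2^q with hKdef
  have hKp : (2:ℝ)^p ≤ K := by
    rw [hKdef]; nlinarith [Real.rpow_pos_of_pos (show (0:ℝ)<2 by norm_num) q]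
  have hKq : (2:ℝ)^q ≤ K := by
    rw [hKdef]; nlinarith [Real.rpow_pos_of_pos (show (0:ℝ)<2 by norm_num) p]
  have hK1 : (1:ℝ) ≤ K := by
    have := Real.one_le_rpow (show (1:ℝ) ≤ 2 by norm_num) (show (0:ℝ) ≤ p by linarith)
    linarith
  set D : ℝ → ℝ := fun s => K * (if s ≤ 1 then s^(1-q) else s^(-p)) with hDdef
  have hDnn : ∀ s, 0 < s → 0 ≤ D s := by
    intro s hs
    rw [hDdef]
    apply mul_nonneg (by linarith)
    split <;> exact Real.rpow_nonneg hs.le _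
  -- pointwise bound
  have hbd : ∀ t s : ℝ, u₀ ≤ t → 0 < s → u₀ ≤ t*s →
      (1 - Real.exp (-s)) * T (t*s) ≤ D s * T t := by
    intro t s ht hs hts
    have ht0 : 0 < t := lt_of_lt_of_le hu₀0 ht
    have hg0 : 0 ≤ 1 - Real.exp (-s) := one_sub_exp_nonneg hs.le
    rw [hDdef]
    by_cases hs1 : s ≤ 1
    · simp only [if_pos hs1]
      have h1 : (1 - Real.exp (-s)) * T (t*s) ≤ s * (2^q * s^(-q) * T t) :=
        mul_le_mul one_sub_exp_le_self (hsm t s ht0 hs hs1 hts) (hTnn _) hs.le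
      have h2 : s * (2^q * s^(-q) * T t) = 2^q * (s^(1:ℝ) * s^(-q)) * T t := by
        rw [Real.rpow_one]; ring
      have h3 : s^(1:ℝ) * s^(-q) = s^(1-q) := by
        rw [← Real.rpow_add hs]; ring_nf
      have h4 : (2:ℝ)^q * s^(1-q) * T t ≤ K * s^(1-q) * T t := by
        apply mul_le_mul_of_nonneg_right _ (hTnn t)
        exact mul_le_mul_of_nonneg_right hKq (Real.rpow_nonneg hs.le _)
      calc (1 - Real.exp (-s)) * T (t*s) ≤ s * (2^q * s^(-q) * T t) := h1
        _ = 2^q * s^(1-q) * T t := by rw [h2, h3]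
        _ ≤ K * s^(1-q) * T t := h4
        _ = K * s^(1-q) * T t := rfl
    · simp only [if_neg hs1]
      push_neg at hs1
      have h1 : (1 - Real.exp (-s)) * T (t*s) ≤ 1 * (2^p * s^(-p) * T t) := by
        apply mul_le_mul _ (hup t s ht hs1.le) (hTnn _) one_pos.le
        linarith [Real.exp_pos (-s)]
      have h2 : (1:ℝ) * (2^p * s^(-p) * T t) ≤ K * s^(-p) * T t := by
        rw [one_mul]
        apply mul_le_mul_of_nonneg_right _ (hTnn t)
        exact mul_le_mul_of_nonneg_right hKp (Real.rpow_nonneg (by linarith) _)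
      exact le_trans h1 h2
  -- integrability of D on Ioi 0
  have hDmeas : Measurable D := by
    apply Measurable.const_mul
    apply Measurable.ite (measurableSet_le measurable_id measurable_const) <;> fun_prop
  have hDint : IntegrableOn D (Ioi (0:ℝ)) := by
    have hD1 : IntegrableOn D (Ioc (0:ℝ) 1) := by
      have hbase : IntegrableOn (fun s : ℝ => s^(1-q)) (Ioc (0:ℝ) 1) := by
        have := intervalIntegral.intervalIntegrable_rpow' (a := 0) (b := 1)
          (show (-1:ℝ) < 1-q by linarith)
        rwa [intervalIntegrable_iff_integrableOn_Ioc_of_le zero_le_one] at this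
      exact IntegrableOn.congr_fun (hbase.const_mul K)
        (fun s hs => by simp only [hDdef, if_pos hs.2]) measurableSet_Ioc
    have hD2 : IntegrableOn D (Ioi (1:ℝ)) := by
      have hbase : IntegrableOn (fun s : ℝ => s^(-p)) (Ioi (1:ℝ)) :=
        integrableOn_Ioi_rpow_of_lt (by linarith) one_pos
      exact IntegrableOn.congr_fun (hbase.const_mul K)
        (fun s hs => by simp only [hDdef, if_neg (not_le.2 (mem_Ioi.1 hs))]) measurableSet_Ioi
    have := hD1.union hD2
    rwa [Ioc_union_Ioi_eq_Ioi zero_le_one] at this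
  -- the limit function and its integrability
  set fl : ℝ → ℝ := fun s => (1 - Real.exp (-s)) * s^(-γ) with hfldef
  have hflnn : ∀ s : ℝ, 0 < s → 0 ≤ fl s := fun s hs =>
    mul_nonneg (one_sub_exp_nonneg hs.le) (Real.rpow_nonneg hs.le _)
  have hflle : ∀ s : ℝ, 0 < s → fl s ≤ D s := by
    intro s hs
    rw [hfldef, hDdef]
    by_cases hs1 : s ≤ 1
    · simp only [if_pos hs1]
      have h1 : (1 - Real.exp (-s)) * s^(-γ) ≤ s * s^(-γ) :=
        mul_le_mul_of_nonneg_right one_sub_exp_le_self (Real.rpow_nonneg hs.le _)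
      have h2 : s * s^(-γ) = s^(1-γ) := by
        rw [show s * s^(-γ) = s^(1:ℝ) * s^(-γ) by rw [Real.rpow_one],
          ← Real.rpow_add hs]; ring_nf
      have h3 : s^(1-γ) ≤ s^(1-q) :=
        Real.rpow_le_rpow_of_exponent_ge hs hs1 (by linarith)
      have h4 : s^(1-q) ≤ K * s^(1-q) :=
        le_mul_of_one_le_left (Real.rpow_nonneg hs.le _) hK1
      linarith [h1, h2 ▸ h1]
    · simp only [if_neg hs1]
      push_neg at hs1
      have h1 : (1 - Real.exp (-s)) * s^(-γ) ≤ 1 * s^(-γ) := by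
        apply mul_le_mul_of_nonneg_right _ (Real.rpow_nonneg hs.le _)
        linarith [Real.exp_pos (-s)]
      have h2 : s^(-γ) ≤ s^(-p) :=
        Real.rpow_le_rpow_of_exponent_le hs1.le (by linarith)
      have h3 : s^(-p) ≤ K * s^(-p) :=
        le_mul_of_one_le_left (Real.rpow_nonneg hs.le _) hK1
      linarith
  have hflmeas : Measurable fl := by
    rw [hfldef]
    fun_prop
  have hflint : IntegrableOn fl (Ioi (0:ℝ)) := by
    apply Integrable.mono' hDint hflmeas.aestronglyMeasurable
    rw [ae_restrict_iff' measurableSet_Ioi]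
    exact ae_of_all _ fun s hs => by
      rw [Real.norm_eq_abs, abs_of_nonneg (hflnn s hs)]; exact hflle s hs
  -- C and its positivity
  set C : ℝ := ∫ s in Ioi (0:ℝ), fl s with hCdef
  have hCpos : 0 < C := by
    have hsub : Ioc (1:ℝ) 2 ⊆ Ioi (0:ℝ) := fun x hx => lt_trans one_pos hx.1
    have hm : (0:ℝ) < (1 - Real.exp (-1)) * 2^(-γ) := by
      apply mul_pos _ (Real.rpow_pos_of_pos two_pos _)
      have : Real.exp (-1) < 1 := by
        rw [← Real.exp_zero]; exact Real.exp_lt_exp.2 (by norm_num)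
      linarith
    have h1 : (1 - Real.exp (-1)) * 2^(-γ) * (volume (Ioc (1:ℝ) 2)).toReal ≤
        ∫ s in Ioc (1:ℝ) 2, fl s := by
      refine setIntegral_ge_of_const_le_real measurableSet_Ioc (by simp) (fun x hx => ?_)
        (hflint.mono_set hsub)
      have hx0 : (0:ℝ) < x := lt_trans one_pos hx.1
      have he : Real.exp (-x) ≤ Real.exp (-1) := Real.exp_le_exp.2 (by linarith [hx.1])
      have he1 : Real.exp (-x) ≤ 1 := by
        rw [← Real.exp_zero]; exact Real.exp_le_exp.2 (by linarith)
      rw [hfldef]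
      exact mul_le_mul (by linarith) (Real.rpow_le_rpow_of_nonpos hx0 hx.2 (by linarith))
        (Real.rpow_nonneg (by norm_num) _) (by linarith)
    have h2 : ∫ s in Ioc (1:ℝ) 2, fl s ≤ C := by
      rw [hCdef]
      apply setIntegral_mono_set hflint
      · filter_upwards [self_mem_ae_restrict measurableSet_Ioi] with s hs
        exact hflnn s hs
      · exact HasSubset.Subset.eventuallyLE hsub
    have hv : (volume (Ioc (1:ℝ) 2)).toReal = 1 := by
      rw [Real.volume_Ioc]; norm_num
    rw [hv, mul_one] at h1
    linarith
  -- the normalized integrand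
  set φ : ℝ → ℝ → ℝ := fun t s => (1 - Real.exp (-s)) * T (t*s) / T t with hφdef
  have hφmeas : ∀ t : ℝ, Measurable (φ t) := by
    intro t
    exact ((measurable_const.sub (Real.measurable_exp.comp measurable_neg)).mul
      (hTm.comp (measurable_const_mul t))).div_const (T t)
  have hφnn : ∀ t s : ℝ, 0 < s → 0 ≤ φ t s := fun t s hs =>
    div_nonneg (mul_nonneg (one_sub_exp_nonneg hs.le) (hTnn _)) (hTnn _)
  set F : ℝ → ℝ → ℝ := fun t s => (Ioi (u₀/t)).indicator (φ t) s with hFdef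
  -- dominated convergence
  have hDCT0 : Tendsto (fun t => ∫ s, F t s ∂(volume.restrict (Ioi (0:ℝ)))) atTop
      (nhds C) := by
    rw [hCdef]
    apply tendsto_integral_filter_of_dominated_convergence D
    · exact Eventually.of_forall fun t =>
        ((hφmeas t).indicator measurableSet_Ioi).aestronglyMeasurable
    · filter_upwards [eventually_ge_atTop u₀] with t ht
      have ht0 : 0 < t := lt_of_lt_of_le hu₀0 ht
      filter_upwards [self_mem_ae_restrict measurableSet_Ioi] with s hs
      by_cases hmem : s ∈ Ioi (u₀/t)
      · simp only [hFdef, indicator_of_mem hmem]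
        have hts : u₀ ≤ t * s := by
          rw [mem_Ioi, div_lt_iff₀ ht0] at hmem
          nlinarith
        rw [Real.norm_eq_abs, abs_of_nonneg (hφnn t s hs)]
        simp only [hφdef]
        rw [div_le_iff₀ (hTpos t ht0)]
        exact hbd t s ht hs hts
      · simp only [hFdef, indicator_of_notMem hmem, norm_zero]
        exact hDnn s hs
    · exact hDint
    · filter_upwards [self_mem_ae_restrict measurableSet_Ioi] with s hs
      have h := (tendsto_const_nhds (x := 1 - Real.exp (-s))).mul (hratio s hs)
      apply Tendsto.congr' _ h
      filter_upwards [eventually_gt_atTop (u₀/s), eventually_gt_atTop 0] with t ht1 ht0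
      have hmem : s ∈ Ioi (u₀/t) := by
        rw [mem_Ioi, div_lt_iff₀ ht0]
        rw [div_lt_iff₀ hs] at ht1
        nlinarith
      simp only [hFdef, indicator_of_mem hmem, hφdef, mul_div_assoc]
  -- rewriting the DCT integral as a set integral
  have hEq : ∀ᶠ t in atTop, (∫ s, F t s ∂(volume.restrict (Ioi (0:ℝ))))
      = ∫ s in Ioi (u₀/t), φ t s := by
    filter_upwards [eventually_gt_atTop 0] with t ht0
    have ha : 0 < u₀/t := div_pos hu₀0 ht0
    rw [hFdef, integral_indicator measurableSet_Ioi, Measure.restrict_restrict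
      measurableSet_Ioi, inter_eq_left.2 (Ioi_subset_Ioi ha.le)]
  have hDCT : Tendsto (fun t => ∫ s in Ioi (u₀/t), φ t s) atTop (nhds C) :=
    Tendsto.congr' hEq hDCT0
  -- integrability of φ t on the two pieces
  have hφIocInt : ∀ t : ℝ, 0 < t → IntegrableOn (φ t) (Ioc 0 (u₀/t)) := by
    intro t ht0
    apply Integrable.mono' (g := fun _ => 1 / T t)
      (integrableOn_const measure_Ioc_lt_top.ne)
      ((hφmeas t).aestronglyMeasurable)
    filter_upwards [self_mem_ae_restrict measurableSet_Ioc] with s hs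
    rw [Real.norm_eq_abs, abs_of_nonneg (hφnn t s hs.1), hφdef]
    have h1 : (1 - Real.exp (-s)) * T (t*s) ≤ 1 :=
      mul_le_one₀ (by linarith [Real.exp_pos (-s)]) (hTnn _) (hT1 _)
    exact div_le_div_of_nonneg_right h1 (hTpos t ht0).le
  have hφIoiInt : ∀ t : ℝ, u₀ ≤ t → IntegrableOn (φ t) (Ioi (u₀/t)) := by
    intro t ht
    have ht0 : 0 < t := lt_of_lt_of_le hu₀0 ht
    have ha : 0 < u₀/t := div_pos hu₀0 ht0
    apply Integrable.mono' (hDint.mono_set (Ioi_subset_Ioi ha.le))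
      ((hφmeas t).aestronglyMeasurable)
    filter_upwards [self_mem_ae_restrict measurableSet_Ioi] with s hs
    rw [mem_Ioi] at hs
    have hs0 : 0 < s := lt_trans ha hs
    have hts : u₀ ≤ t * s := by
      rw [div_lt_iff₀ ht0] at hs
      nlinarith
    rw [Real.norm_eq_abs, abs_of_nonneg (hφnn t s hs0), hφdef]
    rw [div_le_iff₀ (hTpos t ht0)]
    exact hbd t s ht hs0 hts
  -- splitting the integral
  have hsplit : ∀ᶠ t in atTop, (∫ s in Ioi (0:ℝ), (1 - Real.exp (-s)) * T (t*s)) / T t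
      = (∫ s in Ioc 0 (u₀/t), φ t s) + ∫ s in Ioi (u₀/t), φ t s := by
    filter_upwards [eventually_ge_atTop u₀] with t ht
    have ht0 : 0 < t := lt_of_lt_of_le hu₀0 ht
    have ha : 0 < u₀/t := div_pos hu₀0 ht0
    have e1 : (∫ s in Ioi (0:ℝ), (1 - Real.exp (-s)) * T (t*s)) / T t
        = ∫ s in Ioi (0:ℝ), φ t s := by
      rw [← integral_div]
    rw [e1, ← Ioc_union_Ioi_eq_Ioi ha.le, setIntegral_union
      (by exact disjoint_left.2 fun x hx hx' => absurd hx.2 (not_le.2 hx'))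
      measurableSet_Ioi (hφIocInt t ht0) (hφIoiInt t ht)]
  -- remainder tends to zero
  have hRem : Tendsto (fun t => ∫ s in Ioc 0 (u₀/t), φ t s) atTop (nhds 0) := by
    set c1 : ℝ := (u₀^2/2) * (2/u₀)^q / T u₀ with hc1def
    apply squeeze_zero' (g := fun t => c1 * t^(q-2))
    · filter_upwards [eventually_gt_atTop 0] with t ht0
      exact setIntegral_nonneg measurableSet_Ioc fun s hs => hφnn t s hs.1
    · filter_upwards [eventually_ge_atTop u₀] with t ht
      have ht0 : 0 < t := lt_of_lt_of_le hu₀0 ht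
      have ha : 0 < u₀/t := div_pos hu₀0 ht0
      have hTt := hTpos t ht0
      have step1 : (∫ s in Ioc 0 (u₀/t), φ t s) ≤ ∫ s in Ioc (0:ℝ) (u₀/t), s / T t := by
        apply setIntegral_mono_on (hφIocInt t ht0)
          (((continuous_id.div_const (T t)).integrableOn_Ioc)) measurableSet_Ioc
        intro s hs
        rw [hφdef]
        apply div_le_div_of_nonneg_right _ hTt.le
        calc (1 - Real.exp (-s)) * T (t*s) ≤ s * 1 :=
              mul_le_mul one_sub_exp_le_self (hT1 _) (hTnn _) hs.1.le
          _ = s := mul_one s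
      have step2 : (∫ s in Ioc (0:ℝ) (u₀/t), s / T t) = ((u₀/t)^2/2) / T t := by
        rw [integral_div]
        congr 1
        rw [← intervalIntegral.integral_of_le ha.le, integral_id]
        ring
      have step3 : ((u₀/t)^2/2) / T t ≤ ((u₀/t)^2/2) / ((2*t/u₀)^(-q) * T u₀) := by
        apply div_le_div_of_nonneg_left (by positivity)
          (mul_pos (Real.rpow_pos_of_pos (by positivity) _) (hTpos u₀ hu₀0))
          (hTlb t ht)
      have step4 : ((u₀/t)^2/2) / ((2*t/u₀)^(-q) * T u₀) = c1 * t^(q-2) := by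
        have h1 : ((2:ℝ)*t/u₀)^(-q) = ((2/u₀)^q * t^q)⁻¹ := by
          rw [show (2*t/u₀ : ℝ) = (2/u₀)*t by ring,
            Real.rpow_neg (by positivity), Real.mul_rpow (by positivity) ht0.le]
        have h2 : t^(q-2) = t^q / t^(2:ℕ) := by
          rw [← Real.rpow_natCast t 2, ← Real.rpow_sub ht0]; norm_num
        rw [h1, h2, hc1def]
        have hq1 : (0:ℝ) < (2/u₀)^q := Real.rpow_pos_of_pos (by positivity) _
        have hq2' : (0:ℝ) < t^q := Real.rpow_pos_of_pos ht0 _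
        field_simp
      calc (∫ s in Ioc 0 (u₀/t), φ t s) ≤ ∫ s in Ioc (0:ℝ) (u₀/t), s / T t := step1
        _ = ((u₀/t)^2/2) / T t := step2
        _ ≤ ((u₀/t)^2/2) / ((2*t/u₀)^(-q) * T u₀) := step3
        _ = c1 * t^(q-2) := step4
    · have h0 : Tendsto (fun t : ℝ => t^(-(2-q))) atTop (nhds 0) :=
        tendsto_rpow_neg_atTop (by linarith)
      have h1 : Tendsto (fun t : ℝ => c1 * t^(-(2-q))) atTop (nhds (c1 * 0)) :=
        h0.const_mul c1
      rw [mul_zero] at h1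
      apply h1.congr
      intro t
      norm_num
  -- the main limit
  have hsum := hRem.add hDCT
  rw [zero_add] at hsum
  have hMain : Tendsto (fun t => (∫ s in Ioi (0:ℝ), (1 - Real.exp (-s)) * T (t*s)) / T t)
      atTop (nhds C) := Tendsto.congr' (hsplit.mono fun t h => h.symm) hsum
  -- the identity
  have hID : ∀ t : ℝ, 0 < t →
      ((∫ ω, X ω ∂P) / t - 1 + ∫ ω, Real.exp (-X ω / t) ∂P)
        = ∫ s in Ioi (0:ℝ), (1 - Real.exp (-s)) * T (t*s) := by
    intro t ht
    have hXd : Integrable (fun ω => X ω / t) P := hint.div_const t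
    have hexpm : Measurable fun ω => Real.exp (-X ω / t) :=
      Real.measurable_exp.comp ((hX.neg).div_const t)
    have hexpint : Integrable (fun ω => Real.exp (-X ω / t)) P := by
      apply Integrable.mono' (integrable_const (1:ℝ)) hexpm.aestronglyMeasurable
      apply ae_of_all
      intro ω
      rw [Real.norm_eq_abs, abs_of_nonneg (Real.exp_pos _).le, ← Real.exp_zero]
      apply Real.exp_le_exp.2
      exact div_nonpos_of_nonpos_of_nonneg (neg_nonpos.2 (hnn ω)) ht.le
    have e0 : (∫ ω, X ω ∂P) / t - 1 + ∫ ω, Real.exp (-X ω / t) ∂P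
        = ∫ ω, (X ω / t - 1 + Real.exp (-(X ω / t))) ∂P := by
      have h2 : Integrable (fun ω => Real.exp (-(X ω / t))) P := by
        simpa [neg_div] using hexpint
      have h1 : Integrable (fun ω => X ω / t - 1) P := hXd.sub (integrable_const 1)
      rw [integral_add h1 h2,
        integral_sub hXd (integrable_const 1), integral_div, integral_const]
      simp [neg_div]
    have hfnn : 0 ≤ᵐ[P] fun ω => X ω / t := ae_of_all _ fun ω => div_nonneg (hnn ω) ht.le
    have key := lintegral_comp_eq_lintegral_meas_lt_mul P hfnn
        ((hX.div_const t).aemeasurable)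
        (g := fun s => 1 - Real.exp (-s))
        (fun r _ => (continuous_const.sub
          (Real.continuous_exp.comp continuous_neg)).intervalIntegrable 0 r)
        (by filter_upwards [self_mem_ae_restrict measurableSet_Ioi] with s hs
            exact one_sub_exp_nonneg hs.le)
    have keyL : ∫⁻ ω, ENNReal.ofReal (∫ u in (0:ℝ)..(X ω / t), (1 - Real.exp (-u))) ∂P
        = ∫⁻ ω, ENNReal.ofReal (X ω / t - 1 + Real.exp (-(X ω / t))) ∂P := by
      apply lintegral_congr
      intro ω
      rw [integral_one_sub_exp_neg]
    have keyR : ∫⁻ s in Ioi (0:ℝ), P {a | s < X a / t} * ENNReal.ofReal (1 - Real.exp (-s))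
        = ∫⁻ s in Ioi (0:ℝ), ENNReal.ofReal ((1 - Real.exp (-s)) * T (t*s)) := by
      apply setLIntegral_congr_fun measurableSet_Ioi
      intro s hs; beta_reduce
      have hset : {a | s < X a / t} = {ω | t*s < X ω} := by
        ext a
        simp only [mem_setOf_eq]
        rw [lt_div_iff₀ ht]
        constructor <;> intro h <;> nlinarith
      rw [hset, ENNReal.ofReal_mul (one_sub_exp_nonneg hs.le)]
      have : ENNReal.ofReal (T (t*s)) = P {ω | t*s < X ω} := by
        rw [hTdef]
        exact ENNReal.ofReal_toReal (measure_ne_top P _)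
      rw [← this, mul_comm]
    have hGm : Measurable fun ω => X ω / t - 1 + Real.exp (-(X ω / t)) := by
      apply Measurable.add
      · exact (hX.div_const t).sub measurable_const
      · exact Real.measurable_exp.comp ((hX.div_const t).neg)
    have hL : ∫ ω, (X ω / t - 1 + Real.exp (-(X ω / t))) ∂P
        = (∫⁻ ω, ENNReal.ofReal (X ω / t - 1 + Real.exp (-(X ω / t))) ∂P).toReal :=
      integral_eq_lintegral_of_nonneg_ae (ae_of_all _ fun ω => G_nonneg)
        hGm.aestronglyMeasurable
    have hR : ∫ s in Ioi (0:ℝ), (1 - Real.exp (-s)) * T (t*s)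
        = (∫⁻ s in Ioi (0:ℝ), ENNReal.ofReal ((1 - Real.exp (-s)) * T (t*s))).toReal := by
      apply integral_eq_lintegral_of_nonneg_ae
      · filter_upwards [self_mem_ae_restrict measurableSet_Ioi] with s hs
        exact mul_nonneg (one_sub_exp_nonneg hs.le) (hTnn _)
      · exact ((measurable_const.sub (Real.measurable_exp.comp measurable_neg)).mul
          (hTm.comp (measurable_const_mul t))).aestronglyMeasurable
    rw [e0, hL, hR]
    congr 1
    rw [← keyL, ← keyR]
    exact key
  -- final assembly
  refine ⟨C, hCpos, ?_⟩
  have hfinal := hMain.div_const C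
  rw [div_self hCpos.ne'] at hfinal
  apply Tendsto.congr' _ hfinal
  filter_upwards [eventually_gt_atTop 0] with t ht0
  have hTt := hTpos t ht0
  rw [hID t ht0, show C * L t * t^(-γ) = C * T t by rw [hTeq t ht0]; ring,
    div_div, mul_comm (T t) C]
end

section
/- In the configuration model on n nodes with degree sequence D_1,…,D_n and L_n = Σ_i D_i even, the conditional expected number of self-loops satisfies E_n[S_n] ≤ Σ_{i=1}^n D_i²/L_n, and the conditional expected number of multiple edges satisfies E_n[M_n] ≤ 2(Σ_{i=1}^n D_i²/L_n)². -/
open Finset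

/-- The pairings of `N` half-edges: fixed-point-free involutions of `Fin N`.
The configuration model is the uniform distribution on this set. -/
def pairings (N : ℕ) : Finset (Equiv.Perm (Fin N)) :=
  Finset.univ.filter (fun σ => (∀ x, σ (σ x) = x) ∧ ∀ x, σ x ≠ x)

/-- Number of edges between nodes `i` and `j` in the multigraph obtained from
the pairing `σ`, where half-edge `x` belongs to node `v x`. -/
def edgeCount {N n : ℕ} (v : Fin N → Fin n) (σ : Equiv.Perm (Fin N))
    (i j : Fin n) : ℕ :=
  (Finset.univ.filter (fun x => v x = i ∧ v (σ x) = j)).card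

/-- Number of self-loops of the pairing `σ`. -/
noncomputable def selfLoops {N n : ℕ} (v : Fin N → Fin n)
    (σ : Equiv.Perm (Fin N)) : ℝ :=
  ((Finset.univ.filter (fun x => v (σ x) = v x)).card : ℝ) / 2

/-- Number of multiple edges (excess edges beyond the first between each pair of
distinct nodes) of the pairing `σ`. -/
noncomputable def multiEdges {N n : ℕ} (v : Fin N → Fin n)
    (σ : Equiv.Perm (Fin N)) : ℝ :=
  ∑ p ∈ Finset.univ.filter (fun p : Fin n × Fin n => p.1 < p.2),
    if 0 < edgeCount v σ p.1 p.2 then (edgeCount v σ p.1 p.2 : ℝ) - 1 else 0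

lemma mem_pairings_iff {N : ℕ} {σ : Equiv.Perm (Fin N)} :
    σ ∈ pairings N ↔ (∀ x, σ (σ x) = x) ∧ ∀ x, σ x ≠ x := by
  simp [pairings]

lemma count_conj {N : ℕ} (π : Equiv.Perm (Fin N)) (p : Equiv.Perm (Fin N) → Prop)
    [DecidablePred p] :
    ((pairings N).filter fun σ => p σ).card
      = ((pairings N).filter fun σ => p (π⁻¹ * σ * π)).card := by
  apply Finset.card_nbij' (fun σ => π * σ * π⁻¹) (fun σ => π⁻¹ * σ * π)
  · intro σ hσ
    simp only [mem_coe, mem_filter, mem_pairings_iff] at hσ ⊢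
    obtain ⟨⟨h1, h2⟩, hp⟩ := hσ
    refine ⟨⟨fun x => by simp [Equiv.Perm.mul_apply, h1], fun x hx => ?_⟩, ?_⟩
    · apply h2 (π⁻¹ x)
      simpa [Equiv.Perm.mul_apply] using congrArg (fun z => π⁻¹ z) hx
    · simpa [mul_assoc] using hp
  · intro σ hσ
    simp only [mem_coe, mem_filter, mem_pairings_iff] at hσ ⊢
    obtain ⟨⟨h1, h2⟩, hp⟩ := hσ
    refine ⟨⟨fun x => by simp [Equiv.Perm.mul_apply, h1], fun x hx => ?_⟩, ?_⟩
    · apply h2 (π x)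
      simpa [Equiv.Perm.mul_apply] using congrArg (fun z => π z) hx
    · convert hp using 2
  · intro σ _; group
  · intro σ _; group

lemma countOne_const {N : ℕ} {x y z : Fin N} (hy : y ≠ x) (hz : z ≠ x) :
    ((pairings N).filter fun σ => σ x = y).card
      = ((pairings N).filter fun σ => σ x = z).card := by
  rcases eq_or_ne y z with rfl | hyz
  · rfl
  have h := count_conj (N := N) (Equiv.swap y z) (fun σ => σ x = y)
  rw [h]
  apply congrArg
  apply Finset.filter_congr
  intro σ _
  simp only [Equiv.Perm.mul_apply, Equiv.swap_inv,
    Equiv.swap_apply_of_ne_of_ne hy.symm hz.symm,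
    Equiv.apply_eq_iff_eq_symm_apply, Equiv.symm_swap, Equiv.swap_apply_left]

lemma sigma_apply_ne {N : ℕ} {σ : Equiv.Perm (Fin N)} (hσ : σ ∈ pairings N)
    (x : Fin N) : σ x ≠ x := (mem_pairings_iff.1 hσ).2 x

lemma countOne {N : ℕ} {x y : Fin N} (hy : y ≠ x) :
    ((pairings N).filter fun σ => σ x = y).card * (N - 1) = (pairings N).card := by
  have hpart : (pairings N).card
      = ∑ z ∈ univ.erase x, ((pairings N).filter fun σ => σ x = z).card := by
    apply Finset.card_eq_sum_card_fiberwise (f := fun σ : Equiv.Perm (Fin N) => σ x)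
    intro σ hσ
    exact Finset.mem_erase.2 ⟨sigma_apply_ne hσ x, Finset.mem_univ _⟩
  rw [hpart,
    Finset.sum_congr rfl fun z hz => countOne_const (Finset.mem_erase.1 hz).1 hy,
    Finset.sum_const, smul_eq_mul, Finset.card_erase_of_mem (Finset.mem_univ x),
    Finset.card_univ, Fintype.card_fin, mul_comm]

lemma countTwo_const {N : ℕ} {x x' y y' z z' : Fin N} (hxx' : x ≠ x')
    (hyx : y ≠ x) (hyx' : y ≠ x') (hy'x : y' ≠ x) (hy'x' : y' ≠ x') (hyy' : y ≠ y')
    (hzx : z ≠ x) (hzx' : z ≠ x') (hz'x : z' ≠ x) (hz'x' : z' ≠ x') (hzz' : z ≠ z') :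
    ((pairings N).filter fun σ => σ x = y ∧ σ x' = y').card
      = ((pairings N).filter fun σ => σ x = z ∧ σ x' = z').card := by
  set τ₁ := Equiv.swap y z with hτ₁
  set w := τ₁ y' with hw
  set τ₂ := Equiv.swap w z' with hτ₂
  set π := τ₂ * τ₁ with hπ
  have hτ₁x : τ₁ x = x := Equiv.swap_apply_of_ne_of_ne hyx.symm hzx.symm
  have hτ₁x' : τ₁ x' = x' := Equiv.swap_apply_of_ne_of_ne hyx'.symm hzx'.symm
  have hτ₁y : τ₁ y = z := Equiv.swap_apply_left y z
  have hwx : w ≠ x := by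
    rw [hw, ← hτ₁x]; exact fun h => hy'x (τ₁.injective h)
  have hwx' : w ≠ x' := by
    rw [hw, ← hτ₁x']; exact fun h => hy'x' (τ₁.injective h)
  have hwz : w ≠ z := by
    rw [hw, ← hτ₁y]; exact fun h => hyy' (τ₁.injective h).symm
  have hτ₂x : τ₂ x = x := Equiv.swap_apply_of_ne_of_ne hwx.symm hz'x.symm
  have hτ₂x' : τ₂ x' = x' := Equiv.swap_apply_of_ne_of_ne hwx'.symm hz'x'.symm
  have hτ₂z : τ₂ z = z := Equiv.swap_apply_of_ne_of_ne hwz.symm hzz'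
  have hπx : π x = x := by rw [hπ, Equiv.Perm.mul_apply, hτ₁x, hτ₂x]
  have hπx' : π x' = x' := by rw [hπ, Equiv.Perm.mul_apply, hτ₁x', hτ₂x']
  have hπy : π y = z := by rw [hπ, Equiv.Perm.mul_apply, hτ₁y, hτ₂z]
  have hπy' : π y' = z' := by
    rw [hπ, Equiv.Perm.mul_apply, ← hw, hτ₂, Equiv.swap_apply_left]
  have h := count_conj (N := N) π (fun σ => σ x = y ∧ σ x' = y')
  rw [h]
  apply congrArg
  apply Finset.filter_congr
  intro σ _
  simp only [Equiv.Perm.mul_apply, hπx, hπx']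
  rw [← hπy, ← hπy']
  constructor
  · rintro ⟨h1, h2⟩
    exact ⟨by rw [← h1]; simp,
      by rw [← h2]; simp⟩
  · rintro ⟨h1, h2⟩
    exact ⟨by rw [h1]; simp,
      by rw [h2]; simp⟩

lemma countTwo {N : ℕ} {x x' y y' : Fin N} (hxx' : x ≠ x')
    (hyx : y ≠ x) (hyx' : y ≠ x') (hy'x : y' ≠ x) (hy'x' : y' ≠ x') (hyy' : y ≠ y') :
    ((pairings N).filter fun σ => σ x = y ∧ σ x' = y').card * ((N - 1) * (N - 3))
      = (pairings N).card := by
  have h4 : 4 ≤ N := by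
    have hsub : ({x, x', y, y'} : Finset (Fin N)).card ≤ N := by
      simpa using Finset.card_le_univ ({x, x', y, y'} : Finset (Fin N))
    have hc : ({x, x', y, y'} : Finset (Fin N)).card = 4 := by
      rw [Finset.card_insert_of_notMem (by simp [hxx', hyx.symm, hy'x.symm]),
        Finset.card_insert_of_notMem (by simp [hyx'.symm, hy'x'.symm]),
        Finset.card_insert_of_notMem (by simp [hyy']), Finset.card_singleton]
    omega
  set S : Finset (Fin N) := (univ.erase x).erase x' with hS
  have hScard : S.card = N - 2 := by
    rw [hS, Finset.card_erase_of_mem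
      (Finset.mem_erase.2 ⟨hxx'.symm, Finset.mem_univ _⟩),
      Finset.card_erase_of_mem (Finset.mem_univ _), Finset.card_univ,
      Fintype.card_fin]
    omega
  set T : Finset (Fin N × Fin N) := insert (x', x) S.offDiag with hT
  have hpart : (pairings N).card
      = ∑ p ∈ T, ((pairings N).filter fun σ => (σ x, σ x') = p).card := by
    apply Finset.card_eq_sum_card_fiberwise
      (f := fun σ : Equiv.Perm (Fin N) => (σ x, σ x'))
    intro σ hσ
    simp only [Finset.mem_coe]
    obtain ⟨hinv, hfix⟩ := mem_pairings_iff.1 hσ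
    by_cases hc : σ x = x'
    · have : σ x' = x := by rw [← hc, hinv]
      rw [hc, this]; exact Finset.mem_insert_self _ _
    · apply Finset.mem_insert_of_mem
      apply Finset.mem_offDiag.2
      have hx'x : σ x' ≠ x := by
        intro h
        exact hc (by rw [← h, hinv])
      exact ⟨Finset.mem_erase.2 ⟨hc, Finset.mem_erase.2 ⟨hfix x, Finset.mem_univ _⟩⟩,
        Finset.mem_erase.2 ⟨hfix x', Finset.mem_erase.2 ⟨hx'x, Finset.mem_univ _⟩⟩,
        fun h => hxx' (σ.injective h)⟩
  have hnotmem : (x', x) ∉ S.offDiag := by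
    intro h
    exact absurd (Finset.mem_erase.1 (Finset.mem_offDiag.1 h).1).1 (by simp)
  rw [hT, Finset.sum_insert hnotmem] at hpart
  set c2 := ((pairings N).filter fun σ => σ x = y ∧ σ x' = y').card with hc2
  have hfib2 : ∀ p ∈ S.offDiag,
      ((pairings N).filter fun σ => (σ x, σ x') = p).card = c2 := by
    rintro ⟨z, z'⟩ hp
    obtain ⟨hz, hz', hzz'⟩ := Finset.mem_offDiag.1 hp
    obtain ⟨hzx', hzx, -⟩ : z ≠ x' ∧ z ≠ x ∧ True := by
      obtain ⟨h1, h2⟩ := Finset.mem_erase.1 hz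
      exact ⟨h1, (Finset.mem_erase.1 h2).1, trivial⟩
    obtain ⟨hz'x', hz'x, -⟩ : z' ≠ x' ∧ z' ≠ x ∧ True := by
      obtain ⟨h1, h2⟩ := Finset.mem_erase.1 hz'
      exact ⟨h1, (Finset.mem_erase.1 h2).1, trivial⟩
    have : ((pairings N).filter fun σ => (σ x, σ x') = (z, z')).card
        = ((pairings N).filter fun σ => σ x = z ∧ σ x' = z').card := by
      apply congrArg
      apply Finset.filter_congr
      intro σ _
      simp [Prod.ext_iff]
    rw [this, hc2]
    exact (countTwo_const hxx' hyx hyx' hy'x hy'x' hyy' hzx hzx' hz'x hz'x' hzz').symm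
  rw [Finset.sum_congr rfl hfib2, Finset.sum_const, smul_eq_mul] at hpart
  have hfib1 : ((pairings N).filter fun σ => (σ x, σ x') = (x', x)).card * (N - 1)
      = (pairings N).card := by
    have : ((pairings N).filter fun σ => (σ x, σ x') = (x', x)).card
        = ((pairings N).filter fun σ => σ x = x').card := by
      apply congrArg
      apply Finset.filter_congr
      intro σ hσ
      obtain ⟨hinv, -⟩ := mem_pairings_iff.1 hσ
      simp only [Prod.ext_iff]
      constructor
      · exact fun h => h.1
      · intro h
        exact ⟨h, by rw [← h, hinv]⟩
    rw [this]
    exact countOne hxx'.symm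
  set c1 := ((pairings N).filter fun σ => (σ x, σ x') = (x', x)).card with hc1d
  set Z := (pairings N).card with hZ
  obtain ⟨a, rfl⟩ : ∃ a, N = a + 4 := ⟨N - 4, by omega⟩
  have e1 : a + 4 - 1 = a + 3 := by omega
  have e2 : a + 4 - 3 = a + 1 := by omega
  have e3 : Finset.card S.offDiag = (a + 2) * (a + 1) := by
    rw [Finset.offDiag_card, hScard]
    have h5 : a + 4 - 2 = a + 2 := by omega
    rw [h5]
    have h6 : (a + 2) * (a + 2) = (a + 2) * (a + 1) + (a + 2) := by ring
    rw [h6, Nat.add_sub_cancel]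
  rw [e1, e2]
  rw [e1] at hfib1
  rw [e3] at hpart
  -- hfib1 : c1 * (a+3) = Z ; hpart : Z = c1 + (a+2)*(a+1)*c2
  have h2 : c1 * (a + 3) = c1 * (a + 2) + c1 := by ring
  have h4' : c1 * (a + 2) + c1 = (a + 2) * (a + 1) * c2 + c1 := by
    rw [← h2, hfib1, hpart]; ring
  have key : c1 * (a + 2) = ((a + 1) * c2) * (a + 2) := by
    have h5 := Nat.add_right_cancel h4'
    rw [h5]; ring
  have hkey : c1 = (a + 1) * c2 :=
    Nat.eq_of_mul_eq_mul_right (by omega) key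
  rw [hkey] at hfib1
  rw [← hfib1]
  ring

lemma count_cond_single {N : ℕ} (x : Fin N) (q : Fin N → Prop) [DecidablePred q] :
    ((pairings N).filter fun σ => q (σ x)).card * (N - 1)
      = ((univ.filter q).erase x).card * (pairings N).card := by
  have h : ((pairings N).filter fun σ => q (σ x)).card
      = ∑ z ∈ (univ.filter q).erase x, ((pairings N).filter fun σ => σ x = z).card := by
    have hpart : ((pairings N).filter fun σ => q (σ x)).card
        = ∑ z ∈ (univ.filter q).erase x,
            (((pairings N).filter fun σ => q (σ x)).filter fun σ => σ x = z).card := by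
      apply Finset.card_eq_sum_card_fiberwise
        (f := fun σ : Equiv.Perm (Fin N) => σ x)
      intro σ hσ
      obtain ⟨hσp, hq⟩ := Finset.mem_filter.1 hσ
      exact Finset.mem_erase.2 ⟨sigma_apply_ne hσp x,
        Finset.mem_filter.2 ⟨Finset.mem_univ _, hq⟩⟩
    rw [hpart]
    apply Finset.sum_congr rfl
    intro z hz
    rw [Finset.filter_filter]
    apply congrArg
    apply Finset.filter_congr
    intro σ _
    have hqz : q z := (Finset.mem_filter.1 (Finset.mem_erase.1 hz).2).2
    constructor
    · exact fun h => h.2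
    · exact fun h => ⟨h ▸ hqz, h⟩
  rw [h, Finset.sum_mul]
  rw [Finset.sum_congr rfl (fun z hz => countOne (Finset.mem_erase.1 hz).1),
    Finset.sum_const, smul_eq_mul]

lemma count_cond_pair {N : ℕ} (x x' : Fin N) (hxx' : x ≠ x')
    (q : Fin N → Prop) [DecidablePred q] (hqx : ¬ q x) (hqx' : ¬ q x') :
    ((pairings N).filter fun σ => q (σ x) ∧ q (σ x')).card * ((N - 1) * (N - 3))
      = (univ.filter q).offDiag.card * (pairings N).card := by
  have h : ((pairings N).filter fun σ => q (σ x) ∧ q (σ x')).card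
      = ∑ p ∈ (univ.filter q).offDiag,
          ((pairings N).filter fun σ => σ x = p.1 ∧ σ x' = p.2).card := by
    have hpart : ((pairings N).filter fun σ => q (σ x) ∧ q (σ x')).card
        = ∑ p ∈ (univ.filter q).offDiag,
            (((pairings N).filter fun σ => q (σ x) ∧ q (σ x')).filter
              fun σ => (σ x, σ x') = p).card := by
      apply Finset.card_eq_sum_card_fiberwise
        (f := fun σ : Equiv.Perm (Fin N) => (σ x, σ x'))
      intro σ hσ
      obtain ⟨hσp, hq1, hq2⟩ := Finset.mem_filter.1 hσ
      exact Finset.mem_offDiag.2 ⟨Finset.mem_filter.2 ⟨Finset.mem_univ _, hq1⟩,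
        Finset.mem_filter.2 ⟨Finset.mem_univ _, hq2⟩,
        fun h => hxx' (σ.injective h)⟩
    rw [hpart]
    apply Finset.sum_congr rfl
    rintro ⟨z, z'⟩ hp
    rw [Finset.filter_filter]
    apply congrArg
    apply Finset.filter_congr
    intro σ _
    obtain ⟨h1, h2, h3⟩ := Finset.mem_offDiag.1 hp
    have hqz : q z := (Finset.mem_filter.1 h1).2
    have hqz' : q z' := (Finset.mem_filter.1 h2).2
    simp only [Prod.ext_iff]
    constructor
    · exact fun h => h.2
    · rintro ⟨ha, hb⟩
      exact ⟨⟨ha ▸ hqz, hb ▸ hqz'⟩, ha, hb⟩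
  rw [h, Finset.sum_mul]
  have hterm : ∀ p ∈ (univ.filter q).offDiag,
      ((pairings N).filter fun σ => σ x = p.1 ∧ σ x' = p.2).card * ((N - 1) * (N - 3))
        = (pairings N).card := by
    rintro ⟨z, z'⟩ hp
    obtain ⟨h1, h2, h3⟩ := Finset.mem_offDiag.1 hp
    have hqz : q z := (Finset.mem_filter.1 h1).2
    have hqz' : q z' := (Finset.mem_filter.1 h2).2
    exact countTwo hxx' (fun h => hqx (h ▸ hqz)) (fun h => hqx' (h ▸ hqz))
      (fun h => hqx (h ▸ hqz')) (fun h => hqx' (h ▸ hqz')) h3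
  rw [Finset.sum_congr rfl hterm, Finset.sum_const, smul_eq_mul]

lemma selfLoop_sum {N n : ℕ} (v : Fin N → Fin n) (D : Fin n → ℕ)
    (hv : ∀ i, (Finset.univ.filter (fun x => v x = i)).card = D i) :
    (∑ σ ∈ pairings N, (univ.filter fun x => v (σ x) = v x).card) * (N - 1)
      = (∑ i, D i * (D i - 1)) * (pairings N).card := by
  have hswap : (∑ σ ∈ pairings N, (univ.filter fun x => v (σ x) = v x).card)
      = ∑ x : Fin N, ((pairings N).filter fun σ => v (σ x) = v x).card := by
    simp only [Finset.card_filter]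
    rw [Finset.sum_comm]
  rw [hswap, Finset.sum_mul]
  have hterm : ∀ x : Fin N,
      ((pairings N).filter fun σ => v (σ x) = v x).card * (N - 1)
        = (D (v x) - 1) * (pairings N).card := by
    intro x
    rw [count_cond_single x (fun y => v y = v x)]
    congr 1
    rw [Finset.card_erase_of_mem
      (show x ∈ univ.filter fun y => v y = v x from
        Finset.mem_filter.2 ⟨Finset.mem_univ _, rfl⟩), hv]
  rw [Finset.sum_congr rfl fun x _ => hterm x]
  have hgroup : (∑ x : Fin N, (D (v x) - 1)) = ∑ i, D i * (D i - 1) := by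
    rw [← Finset.sum_fiberwise_of_maps_to (g := v) (t := (univ : Finset (Fin n)))
      (fun x _ => Finset.mem_univ (v x)) (fun x => D (v x) - 1)]
    apply Finset.sum_congr rfl
    intro i _
    rw [Finset.sum_congr rfl (fun x hx => by
        rw [(Finset.mem_filter.1 hx).2]),
      Finset.sum_const, smul_eq_mul, hv]
  rw [← hgroup, Finset.sum_mul]

lemma multiEdge_sum_fixed {N n : ℕ} (v : Fin N → Fin n) (D : Fin n → ℕ)
    (hv : ∀ i, (Finset.univ.filter (fun x => v x = i)).card = D i)
    {i j : Fin n} (hij : i ≠ j) :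
    (∑ σ ∈ pairings N,
        ((univ.filter fun x => v x = i ∧ v (σ x) = j).offDiag.card)) * ((N - 1) * (N - 3))
      = ((D i * D i - D i) * (D j * D j - D j)) * (pairings N).card := by
  have hstepA : ∀ σ : Equiv.Perm (Fin N),
      (univ.filter fun x => v x = i ∧ v (σ x) = j).offDiag
        = ((univ.filter fun x => v x = i).offDiag).filter
            fun q => v (σ q.1) = j ∧ v (σ q.2) = j := by
    intro σ
    ext ⟨q1, q2⟩
    simp only [Finset.mem_offDiag, Finset.mem_filter, Finset.mem_univ, true_and]
    tauto
  have hswap : (∑ σ ∈ pairings N,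
      ((univ.filter fun x => v x = i ∧ v (σ x) = j).offDiag.card))
      = ∑ q ∈ (univ.filter fun x => v x = i).offDiag,
          ((pairings N).filter fun σ => v (σ q.1) = j ∧ v (σ q.2) = j).card := by
    rw [Finset.sum_congr rfl fun σ _ => congrArg Finset.card (hstepA σ)]
    simp only [Finset.card_filter]
    rw [Finset.sum_comm]
  rw [hswap, Finset.sum_mul]
  have hterm : ∀ q ∈ (univ.filter fun x => v x = i).offDiag,
      ((pairings N).filter fun σ => v (σ q.1) = j ∧ v (σ q.2) = j).card
          * ((N - 1) * (N - 3))
        = (D j * D j - D j) * (pairings N).card := by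
    rintro ⟨x, x'⟩ hq
    obtain ⟨h1, h2, h3⟩ := Finset.mem_offDiag.1 hq
    have hvx : v x = i := (Finset.mem_filter.1 h1).2
    have hvx' : v x' = i := (Finset.mem_filter.1 h2).2
    rw [count_cond_pair x x' h3 (fun y => v y = j)
      (fun h => hij (by rw [← hvx]; exact h))
      (fun h => hij (by rw [← hvx']; exact h))]
    congr 1
    rw [Finset.offDiag_card, hv]
  rw [Finset.sum_congr rfl hterm, Finset.sum_const, smul_eq_mul,
    Finset.offDiag_card, hv]
  ring

lemma pair_sum_bound {n : ℕ} (b : Fin n → ℕ) :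
    2 * ∑ p ∈ univ.filter (fun p : Fin n × Fin n => p.1 < p.2), b p.1 * b p.2
      ≤ (∑ i, b i) * (∑ i, b i) := by
  have hswap : ∑ p ∈ univ.filter (fun p : Fin n × Fin n => p.1 < p.2), b p.1 * b p.2
      = ∑ p ∈ univ.filter (fun p : Fin n × Fin n => p.2 < p.1), b p.1 * b p.2 := by
    apply Finset.sum_nbij' (i := Prod.swap) (j := Prod.swap)
    · intro p hp
      simp only [Finset.mem_filter, Finset.mem_univ, true_and] at hp ⊢
      exact hp
    · intro p hp
      simp only [Finset.mem_filter, Finset.mem_univ, true_and] at hp ⊢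
      exact hp
    · intro p _; simp
    · intro p _; simp
    · intro p _; simp [mul_comm]
  have hdisj : Disjoint (univ.filter (fun p : Fin n × Fin n => p.1 < p.2))
      (univ.filter (fun p : Fin n × Fin n => p.2 < p.1)) := by
    rw [Finset.disjoint_left]
    intro p hp hp'
    simp only [Finset.mem_filter] at hp hp'
    exact absurd hp'.2 (not_lt_of_gt hp.2)
  calc 2 * ∑ p ∈ univ.filter (fun p : Fin n × Fin n => p.1 < p.2), b p.1 * b p.2
      = (∑ p ∈ univ.filter (fun p : Fin n × Fin n => p.1 < p.2), b p.1 * b p.2)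
        + ∑ p ∈ univ.filter (fun p : Fin n × Fin n => p.2 < p.1), b p.1 * b p.2 := by
        rw [← hswap]; ring
    _ = ∑ p ∈ (univ.filter (fun p : Fin n × Fin n => p.1 < p.2))
          ∪ (univ.filter (fun p : Fin n × Fin n => p.2 < p.1)), b p.1 * b p.2 :=
        (Finset.sum_union hdisj).symm
    _ ≤ ∑ p : Fin n × Fin n, b p.1 * b p.2 :=
        Finset.sum_le_sum_of_subset (Finset.subset_univ _)
    _ = (∑ i, b i) * (∑ i, b i) := by
        rw [Finset.sum_mul_sum]
        rw [Fintype.sum_prod_type]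

lemma aux_nat (X : ℕ) : 2 * (X - 1) ≤ X * X - X := by
  rcases Nat.lt_or_ge X 2 with h2 | h2
  · interval_cases X <;> simp
  · have h : X * (X - 1) = X * X - X := Nat.mul_pred X X ▸ rfl
    rw [← h]
    exact Nat.mul_le_mul_right _ h2
/-- In the configuration model with degrees `D` and `L_n = ∑ Dᵢ` even, the
conditional expected number of self-loops is at most `∑ Dᵢ²/L_n`, and the
conditional expected number of multiple edges is at most `2(∑ Dᵢ²/L_n)²`. -/
theorem cm_expected_self_loops_and_multi_edges (n N : ℕ) (D : Fin n → ℕ)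
    (hN : N = ∑ i, D i) (hEven : Even N) (hNpos : 0 < N)
    (v : Fin N → Fin n)
    (hv : ∀ i, (Finset.univ.filter (fun x => v x = i)).card = D i) :
    (∑ σ ∈ pairings N, selfLoops v σ) / ((pairings N).card : ℝ) ≤
        ∑ i, (D i : ℝ) ^ 2 / N ∧
      (∑ σ ∈ pairings N, multiEdges v σ) / ((pairings N).card : ℝ) ≤
        2 * (∑ i, (D i : ℝ) ^ 2 / N) ^ 2 := by
  have hRHS0 : (0:ℝ) ≤ ∑ i, (D i : ℝ) ^ 2 / N := by positivity
  have hNR : (0:ℝ) < N := by exact_mod_cast hNpos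
  have hRHS : ∑ i, (D i : ℝ) ^ 2 / N = ((∑ i, D i ^ 2 : ℕ) : ℝ) / N := by
    rw [← Finset.sum_div]
    congr 1
    push_cast
    rfl
  have hN2 : 2 ≤ N := by
    obtain ⟨k, hk⟩ := hEven
    omega
  by_cases hZ0 : (pairings N).card = 0
  · have hemp : pairings N = ∅ := Finset.card_eq_zero.1 hZ0
    rw [hemp]
    simp only [Finset.sum_empty, Finset.card_empty, Nat.cast_zero, zero_div]
    exact ⟨hRHS0, by positivity⟩
  have hZpos : (0:ℝ) < (pairings N).card := by
    exact_mod_cast Nat.pos_of_ne_zero hZ0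
  constructor
  · -- self-loops
    set SL2 := ∑ σ ∈ pairings N, (univ.filter fun x => v (σ x) = v x).card with hSL2
    have hnum : ∑ σ ∈ pairings N, selfLoops v σ = (SL2 : ℝ) / 2 := by
      simp only [selfLoops, hSL2]
      rw [← Finset.sum_div]
      push_cast
      rfl
    have hid := selfLoop_sum v D hv
    have hA : (∑ i, D i * (D i - 1)) ≤ ∑ i, D i ^ 2 := by
      apply Finset.sum_le_sum
      intro i _
      calc D i * (D i - 1) ≤ D i * D i := Nat.mul_le_mul_left _ (Nat.sub_le _ _)
        _ = D i ^ 2 := (sq (D i)).symm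
    have hnat : SL2 * N ≤ 2 * (∑ i, D i ^ 2) * (pairings N).card := by
      calc SL2 * N ≤ SL2 * (2 * (N - 1)) := Nat.mul_le_mul_left _ (by omega)
        _ = 2 * (SL2 * (N - 1)) := by ring
        _ = 2 * ((∑ i, D i * (D i - 1)) * (pairings N).card) := by rw [hid]
        _ ≤ 2 * ((∑ i, D i ^ 2) * (pairings N).card) :=
            Nat.mul_le_mul_left _ (Nat.mul_le_mul_right _ hA)
        _ = 2 * (∑ i, D i ^ 2) * (pairings N).card := by ring
    rw [hnum, hRHS, div_div, div_le_div_iff₀ (by positivity) hNR]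
    have hcast : (SL2 : ℝ) * N ≤ 2 * ((∑ i, D i ^ 2 : ℕ) : ℝ) * (pairings N).card := by
      exact_mod_cast hnat
    linarith
  · -- multi-edges
    by_cases hN4 : 4 ≤ N
    swap
    · have hME : ∀ σ ∈ pairings N, multiEdges v σ = 0 := by
        intro σ hσ
        apply Finset.sum_eq_zero
        intro p hp
        have hX : edgeCount v σ p.1 p.2 ≤ 1 := by
          by_contra hc
          push_neg at hc
          obtain ⟨x, hx, y, hy, hxy⟩ := Finset.one_lt_card.1 hc
          obtain ⟨-, hvx, hvsx⟩ := Finset.mem_filter.1 hx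
          obtain ⟨-, hvy, hvsy⟩ := Finset.mem_filter.1 hy
          have hij : p.1 ≠ p.2 := ne_of_lt (Finset.mem_filter.1 hp).2
          have d1 : x ≠ σ x := fun h => hij (by rw [← hvx, h, hvsx])
          have d2 : x ≠ σ y := fun h => hij (by rw [← hvx, h, hvsy])
          have d3 : y ≠ σ x := fun h => hij (by rw [← hvy, h, hvsx])
          have d4 : y ≠ σ y := fun h => hij (by rw [← hvy, h, hvsy])
          have d5 : σ x ≠ σ y := fun h => hxy (σ.injective h)
          have hsub : ({x, y, σ x, σ y} : Finset (Fin N)).card ≤ N := by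
            simpa using Finset.card_le_univ ({x, y, σ x, σ y} : Finset (Fin N))
          have hc4 : ({x, y, σ x, σ y} : Finset (Fin N)).card = 4 := by
            rw [Finset.card_insert_of_notMem (by simp [hxy, d1, d2]),
              Finset.card_insert_of_notMem (by simp [d3, d4]),
              Finset.card_insert_of_notMem (by simp [d5]), Finset.card_singleton]
          omega
        rcases Nat.lt_or_ge 0 (edgeCount v σ p.1 p.2) with h0 | h0
        · rw [if_pos h0]
          have h1 : edgeCount v σ p.1 p.2 = 1 := by omega
          rw [h1]
          norm_num
        · rw [if_neg (by omega)]
      rw [Finset.sum_congr rfl hME, Finset.sum_const, smul_zero, zero_div]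
      positivity
    -- N ≥ 4
    set B := ∑ i, D i ^ 2 with hB
    set a : Fin n → ℕ := fun i => D i * D i - D i with ha
    set Ppairs := univ.filter (fun p : Fin n × Fin n => p.1 < p.2) with hPp
    set ME2 := ∑ σ ∈ pairings N, ∑ p ∈ Ppairs,
      ((univ.filter fun x => v x = p.1 ∧ v (σ x) = p.2).offDiag.card) with hME2
    set C := ∑ p ∈ Ppairs, a p.1 * a p.2 with hC
    have hpw : ∀ σ ∈ pairings N, multiEdges v σ
        ≤ ∑ p ∈ Ppairs,
            (((univ.filter fun x => v x = p.1 ∧ v (σ x) = p.2).offDiag.card : ℝ)) / 2 := by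
      intro σ _
      apply Finset.sum_le_sum
      intro p hp
      set X := edgeCount v σ p.1 p.2 with hX
      have hcard : (univ.filter fun x => v x = p.1 ∧ v (σ x) = p.2).card = X := rfl
      have hF : (univ.filter fun x => v x = p.1 ∧ v (σ x) = p.2).offDiag.card
          = X * X - X := by rw [Finset.offDiag_card, hcard]
      rw [hF]
      rcases Nat.eq_zero_or_pos X with h0 | h1
      · rw [if_neg (by omega)]
        positivity
      · rw [if_pos h1]
        have h2 : ((X : ℝ) - 1) = ((X - 1 : ℕ) : ℝ) := by
          rw [Nat.cast_sub h1, Nat.cast_one]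
        rw [h2, le_div_iff₀ (by norm_num : (0:ℝ) < 2)]
        have h3 : (X - 1) * 2 ≤ X * X - X := by
          have h4 := aux_nat X
          omega
        exact_mod_cast h3
    have hsum : ∑ σ ∈ pairings N, multiEdges v σ ≤ (ME2 : ℝ) / 2 := by
      calc ∑ σ ∈ pairings N, multiEdges v σ
          ≤ ∑ σ ∈ pairings N, ∑ p ∈ Ppairs,
              (((univ.filter fun x => v x = p.1 ∧ v (σ x) = p.2).offDiag.card : ℝ)) / 2 :=
            Finset.sum_le_sum hpw
        _ = (ME2 : ℝ) / 2 := by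
            simp only [← Finset.sum_div]
            rw [hME2]
            push_cast
            rfl
    have hidME : ME2 * ((N - 1) * (N - 3)) = C * (pairings N).card := by
      rw [hME2, Finset.sum_comm, hC, Finset.sum_mul, Finset.sum_mul]
      refine Finset.sum_congr rfl fun p hp => ?_
      have h := multiEdge_sum_fixed v D hv (ne_of_lt (Finset.mem_filter.1 hp).2)
      rw [h, ha]
    have h2C : 2 * C ≤ B * B := by
      have hstep : C ≤ ∑ p ∈ Ppairs, (fun i => D i ^ 2) p.1 * (fun i => D i ^ 2) p.2 := by
        rw [hC]
        apply Finset.sum_le_sum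
        intro p _
        have hle : ∀ i, a i ≤ D i ^ 2 := by
          intro i
          rw [ha, sq]
          exact Nat.sub_le _ _
        exact Nat.mul_le_mul (hle p.1) (hle p.2)
      calc 2 * C ≤ 2 * ∑ p ∈ Ppairs, (fun i => D i ^ 2) p.1 * (fun i => D i ^ 2) p.2 :=
            Nat.mul_le_mul_left _ hstep
        _ ≤ (∑ i, D i ^ 2) * (∑ i, D i ^ 2) := by
            rw [hPp]
            exact pair_sum_bound (fun i => D i ^ 2)
        _ = B * B := by rw [hB]
    have h8 : N ^ 2 ≤ 8 * ((N - 1) * (N - 3)) := by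
      obtain ⟨m, rfl⟩ : ∃ m, N = m + 4 := ⟨N - 4, by omega⟩
      have e1 : m + 4 - 1 = m + 3 := by omega
      have e2 : m + 4 - 3 = m + 1 := by omega
      rw [e1, e2]
      nlinarith
    have hnat : ME2 * N ^ 2 ≤ 4 * B ^ 2 * (pairings N).card := by
      calc ME2 * N ^ 2 ≤ ME2 * (8 * ((N - 1) * (N - 3))) := Nat.mul_le_mul_left _ h8
        _ = 8 * (ME2 * ((N - 1) * (N - 3))) := by ring
        _ = 8 * (C * (pairings N).card) := by rw [hidME]
        _ = 4 * (2 * C) * (pairings N).card := by ring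
        _ ≤ 4 * (B * B) * (pairings N).card :=
            Nat.mul_le_mul_right _ (Nat.mul_le_mul_left _ h2C)
        _ = 4 * B ^ 2 * (pairings N).card := by ring
    have hfin : (∑ σ ∈ pairings N, multiEdges v σ) / ((pairings N).card : ℝ)
        ≤ (ME2 : ℝ) / 2 / ((pairings N).card : ℝ) := by
      have hm := mul_le_mul_of_nonneg_right hsum (le_of_lt (inv_pos.2 hZpos))
      simpa [div_eq_mul_inv] using hm
    refine hfin.trans ?_
    rw [hRHS, div_div,
      show (2:ℝ) * (((B : ℕ) : ℝ) / N) ^ 2 = (2 * ((B : ℕ) : ℝ) ^ 2) / (N ^ 2) by ring,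
      div_le_div_iff₀ (mul_pos two_pos hZpos) (pow_pos hNR 2)]
    have hcast : (ME2 : ℝ) * (N : ℝ) ^ 2 ≤ 4 * ((B : ℕ) : ℝ) ^ 2 * ((pairings N).card : ℝ) := by
      exact_mod_cast hnat
    refine hcast.trans (le_of_eq ?_)
    ring
end

section
/- Let D_1, D_2 be i.i.d. nonnegative random variables with regularly varying tail of index γ ∈ (1,2) and mean μ. Then for every ε > 0, n^{γ - ε}·(E[D_1D_2]/(μn) - 1 + E[exp(-D_1D_2/(μn))]) → 0 as n → ∞. -/
open MeasureTheory Filter ProbabilityTheory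

lemma exp_term_nonneg (y : ℝ) : 0 ≤ y - 1 + Real.exp (-y) := by
  have := Real.add_one_le_exp (-y); linarith

lemma exp_term_le_rpow (y p : ℝ) (hy : 0 ≤ y) (hp1 : 1 ≤ p) (hp2 : p ≤ 2) :
    y - 1 + Real.exp (-y) ≤ y ^ p := by
  rcases eq_or_lt_of_le hy with h0 | hy0
  · rw [← h0]
    simp [Real.zero_rpow (by linarith : p ≠ 0)]
  rcases le_total y 1 with h1 | h1
  · have hpos : (0:ℝ) < 1 + y := by linarith
    have e2 : (Real.exp y)⁻¹ ≤ (1 + y)⁻¹ := by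
      apply inv_anti₀ hpos
      linarith [Real.add_one_le_exp y]
    have e3 : (1 + y)⁻¹ ≤ 1 - y + y * y := by
      have key : (1:ℝ) ≤ (1 - y + y * y) * (1 + y) := by nlinarith [pow_nonneg hy 3]
      calc (1 + y)⁻¹ = 1 / (1 + y) := (one_div _).symm
        _ ≤ 1 - y + y * y := by rw [div_le_iff₀ hpos]; linarith
    have hexp : Real.exp (-y) ≤ 1 - y + y * y := by
      rw [Real.exp_neg]; linarith
    have h3 : y ^ (2:ℝ) = y * y := by
      rw [show (2:ℝ) = ((2:ℕ):ℝ) by norm_num, Real.rpow_natCast]; ring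
    have h4 : y ^ (2:ℝ) ≤ y ^ p := Real.rpow_le_rpow_of_exponent_ge hy0 h1 hp2
    calc y - 1 + Real.exp (-y) ≤ y - 1 + (1 - y + y * y) := by linarith
      _ = y * y := by ring
      _ = y ^ (2:ℝ) := h3.symm
      _ ≤ y ^ p := h4
  · have hexp : Real.exp (-y) ≤ 1 := by
      rw [← Real.exp_zero]; exact Real.exp_le_exp.mpr (by linarith)
    have h4 : y ≤ y ^ p := by
      calc y = y ^ (1:ℝ) := (Real.rpow_one y).symm
        _ ≤ y ^ p := Real.rpow_le_rpow_of_exponent_le h1 hp1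
    linarith

/-- A Potter-type bound: a tail of the form `L t * t^(-γ)` with `L` slowly varying (only
doubling is needed) and the tail antitone and bounded by 1 satisfies
`T t ≤ C * t^(-(γ - δ))` for `t ≥ 1`. -/
lemma tail_rpow_bound (T L : ℝ → ℝ) (γ δ : ℝ) (hγ : 0 < γ) (hδ : 0 < δ) (hδγ : δ < γ)
    (hT1 : ∀ t, T t ≤ 1) (hTanti : Antitone T)
    (hTL : ∀ t, 0 < t → T t = L t * t ^ (-γ))
    (hLpos : ∀ t, 0 < t → 0 < L t)
    (hSV2 : Tendsto (fun x => L (2 * x) / L x) atTop (nhds 1)) :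
    ∃ C, 0 < C ∧ ∀ t, 1 ≤ t → T t ≤ C * t ^ (-(γ - δ)) := by
  have h2δ : (1:ℝ) < 2 ^ δ := by
    have := Real.rpow_lt_rpow_of_exponent_lt (x := 2) one_lt_two hδ
    rwa [Real.rpow_zero] at this
  obtain ⟨T₁, hT₁⟩ := eventually_atTop.mp (hSV2.eventually_le_const h2δ)
  set T₀ := max T₁ 1 with hT₀def
  have hT₀1 : (1:ℝ) ≤ T₀ := le_max_right _ _
  have hT₀pos : (0:ℝ) < T₀ := lt_of_lt_of_le one_pos hT₀1
  have hdouble : ∀ x, T₀ ≤ x → L (2 * x) ≤ 2 ^ δ * L x := by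
    intro x hx
    have hx0 : 0 < x := lt_of_lt_of_le hT₀pos hx
    have := hT₁ x (le_trans (le_max_left _ _) hx)
    rwa [div_le_iff₀ (hLpos x hx0)] at this
  have hiter : ∀ k : ℕ, L (T₀ * 2 ^ k) ≤ (2:ℝ) ^ (δ * k) * L T₀ := by
    intro k; induction k with
    | zero => simp
    | succ k ih =>
      have hx : T₀ ≤ T₀ * 2 ^ k :=
        le_mul_of_one_le_right hT₀pos.le (one_le_pow₀ one_le_two)
      have h1 : T₀ * 2 ^ (k + 1) = 2 * (T₀ * 2 ^ k) := by ring
      rw [h1]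
      calc L (2 * (T₀ * 2 ^ k)) ≤ 2 ^ δ * L (T₀ * 2 ^ k) := hdouble _ hx
        _ ≤ 2 ^ δ * ((2:ℝ) ^ (δ * k) * L T₀) := by
            apply mul_le_mul_of_nonneg_left ih (Real.rpow_nonneg (by norm_num) _)
        _ = (2:ℝ) ^ (δ * ((k:ℝ) + 1)) * L T₀ := by
            rw [← mul_assoc, ← Real.rpow_add two_pos]
            ring_nf
        _ = (2:ℝ) ^ (δ * ((k + 1 : ℕ) : ℝ)) * L T₀ := by push_cast; ring_nf
  have key : ∀ t, T₀ ≤ t → T t ≤ (L T₀ * 2 ^ γ) * t ^ (-(γ - δ)) := by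
    intro t ht
    have ht0 : 0 < t := lt_of_lt_of_le hT₀pos ht
    have hdiv1 : 1 ≤ t / T₀ := (one_le_div hT₀pos).mpr ht
    set m := ⌊t / T₀⌋₊ with hm
    have hm1 : 1 ≤ m := Nat.le_floor (by exact_mod_cast hdiv1)
    set k := Nat.log 2 m with hk
    have h2k : 2 ^ k ≤ m := Nat.pow_log_le_self 2 (by omega)
    have hm2 : m < 2 ^ (k + 1) := Nat.lt_pow_succ_log_self one_lt_two m
    have hlow : T₀ * 2 ^ k ≤ t := by
      have e1 : ((2:ℝ)) ^ k ≤ (m:ℝ) := by exact_mod_cast h2k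
      have e2 : (m:ℝ) ≤ t / T₀ := Nat.floor_le (by positivity)
      calc T₀ * 2 ^ k ≤ T₀ * (t / T₀) :=
            mul_le_mul_of_nonneg_left (e1.trans e2) hT₀pos.le
        _ = t := by field_simp
    have hhigh : t < T₀ * 2 ^ (k + 1) := by
      have h3 : t / T₀ < m + 1 := Nat.lt_floor_add_one _
      have h4 : (m:ℝ) + 1 ≤ 2 ^ (k + 1) := by exact_mod_cast Nat.succ_le_of_lt hm2
      calc t = T₀ * (t / T₀) := by field_simp
        _ < T₀ * ((m:ℝ) + 1) := by exact mul_lt_mul_of_pos_left h3 hT₀pos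
        _ ≤ T₀ * 2 ^ (k + 1) := mul_le_mul_of_nonneg_left h4 hT₀pos.le
    have hTt : T t ≤ T (T₀ * 2 ^ k) := hTanti hlow
    have hpos2k : (0:ℝ) < T₀ * 2 ^ k := by positivity
    rw [hTL _ hpos2k] at hTt
    have hL : L (T₀ * 2 ^ k) ≤ t ^ δ * L T₀ := by
      refine (hiter k).trans ?_
      have h2k' : ((2:ℝ) ^ k) ≤ t := by
        calc (2:ℝ) ^ k ≤ T₀ * 2 ^ k := le_mul_of_one_le_left (by positivity) hT₀1
          _ ≤ t := hlow
      have hee : (2:ℝ) ^ (δ * k) ≤ t ^ δ := by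
        calc (2:ℝ) ^ (δ * (k:ℕ)) = ((2:ℝ) ^ (k:ℕ)) ^ δ := by
              rw [← Real.rpow_natCast 2 k, ← Real.rpow_mul (by norm_num), mul_comm]
        _ ≤ t ^ δ := Real.rpow_le_rpow (by positivity) h2k' hδ.le
      exact mul_le_mul_of_nonneg_right hee (hLpos T₀ hT₀pos).le
    have hpow : (T₀ * 2 ^ k) ^ (-γ) ≤ (t / 2) ^ (-γ) := by
      apply Real.rpow_le_rpow_of_nonpos (by positivity) ?_ (by linarith)
      have h5 : t < T₀ * (2 ^ k * 2) := by rw [← pow_succ]; exact hhigh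
      linarith
    have hhalf : (t / 2) ^ (-γ) = 2 ^ γ * t ^ (-γ) := by
      rw [Real.div_rpow ht0.le two_pos.le, Real.rpow_neg two_pos.le,
        div_eq_mul_inv, inv_inv]
      ring
    calc T t ≤ L (T₀ * 2 ^ k) * (T₀ * 2 ^ k) ^ (-γ) := hTt
      _ ≤ (t ^ δ * L T₀) * ((t / 2) ^ (-γ)) := by
          apply mul_le_mul hL hpow (Real.rpow_nonneg (by positivity) _)
          have := hLpos T₀ hT₀pos
          positivity
      _ = (L T₀ * 2 ^ γ) * (t ^ δ * t ^ (-γ)) := by rw [hhalf]; ring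
      _ = (L T₀ * 2 ^ γ) * t ^ (-(γ - δ)) := by
          rw [← Real.rpow_add ht0]; ring_nf
  have hLT₀ : 0 < L T₀ := hLpos T₀ hT₀pos
  refine ⟨max (L T₀ * 2 ^ γ) (T₀ ^ (γ - δ)), ?_, ?_⟩
  · exact lt_max_of_lt_right (Real.rpow_pos_of_pos hT₀pos _)
  · intro t ht1
    have ht0 : 0 < t := lt_of_lt_of_le one_pos ht1
    rcases le_total T₀ t with h | h
    · exact (key t h).trans
        (mul_le_mul_of_nonneg_right (le_max_left _ _) (Real.rpow_nonneg ht0.le _))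
    · have h2 : (1:ℝ) ≤ T₀ ^ (γ - δ) * t ^ (-(γ - δ)) := by
        have hmono : T₀ ^ (-(γ - δ)) ≤ t ^ (-(γ - δ)) :=
          Real.rpow_le_rpow_of_nonpos ht0 h (by linarith)
        calc (1:ℝ) = T₀ ^ (γ - δ) * T₀ ^ (-(γ - δ)) := by
              rw [← Real.rpow_add hT₀pos]; simp
          _ ≤ T₀ ^ (γ - δ) * t ^ (-(γ - δ)) :=
              mul_le_mul_of_nonneg_left hmono (Real.rpow_nonneg hT₀pos.le _)
      calc T t ≤ 1 := hT1 t
        _ ≤ T₀ ^ (γ - δ) * t ^ (-(γ - δ)) := h2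
        _ ≤ max (L T₀ * 2 ^ γ) (T₀ ^ (γ - δ)) * t ^ (-(γ - δ)) :=
            mul_le_mul_of_nonneg_right (le_max_right _ _) (Real.rpow_nonneg ht0.le _)

/-- A `p`-th moment is finite when the tail is bounded by `C t^{-q}` with `p < q`. -/
lemma integrable_rpow_of_tailbound {Ω : Type*} [MeasurableSpace Ω] (P : Measure Ω)
    [IsProbabilityMeasure P] (D : Ω → ℝ) (hD : Measurable D) (hnn : ∀ ω, 0 ≤ D ω)
    (C q p : ℝ) (hq : 1 < q) (hp : 1 ≤ p) (hpq : p < q)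
    (htail : ∀ t : ℝ, 1 ≤ t → (P {ω | t < D ω}).toReal ≤ C * t ^ (-q)) :
    Integrable (fun ω => D ω ^ p) P := by
  have hp0 : 0 < p := by linarith
  have hC0 : 0 ≤ C := by
    have h := htail 1 le_rfl
    have h0 : (0:ℝ) ≤ (P {ω | (1:ℝ) < D ω}).toReal := ENNReal.toReal_nonneg
    simpa using h0.trans h
  have hmeas : Measurable fun ω => D ω ^ p :=
    (Real.continuous_rpow_const hp0.le).measurable.comp hD
  constructor
  · exact hmeas.aestronglyMeasurable
  rw [hasFiniteIntegral_iff_ofReal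
    (Eventually.of_forall fun ω => Real.rpow_nonneg (hnn ω) p)]
  rw [MeasureTheory.lintegral_rpow_eq_lintegral_meas_lt_mul P
    (Eventually.of_forall hnn) hD.aemeasurable hp0]
  refine ENNReal.mul_lt_top ENNReal.ofReal_lt_top ?_
  have hsplit : (Set.Ioi (0:ℝ)) = Set.Ioc 0 1 ∪ Set.Ioi 1 :=
    (Set.Ioc_union_Ioi_eq_Ioi zero_le_one).symm
  rw [hsplit, lintegral_union measurableSet_Ioi (Set.Ioc_disjoint_Ioi le_rfl)]
  refine ENNReal.add_lt_top.mpr ⟨?_, ?_⟩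
  · calc (∫⁻ t in Set.Ioc (0:ℝ) 1, P {a | t < D a} * ENNReal.ofReal (t ^ (p - 1)))
        ≤ ∫⁻ x in Set.Ioc (0:ℝ) 1, (1:ENNReal) := by
          apply lintegral_mono_ae
          filter_upwards [ae_restrict_mem measurableSet_Ioc] with t ht
          have h1 : P {a | t < D a} ≤ 1 := prob_le_one
          have h2 : ENNReal.ofReal (t ^ (p - 1)) ≤ 1 := by
            rw [show (1:ENNReal) = ENNReal.ofReal 1 by simp]
            exact ENNReal.ofReal_le_ofReal
              (Real.rpow_le_one ht.1.le ht.2 (by linarith))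
          exact le_trans (mul_le_mul' h1 h2) (by simp)
      _ < ⊤ := by
          rw [setLIntegral_one, Real.volume_Ioc]
          simp
  · have hInt : IntegrableOn (fun t : ℝ => C * t ^ (p - 1 - q)) (Set.Ioi 1) :=
      (integrableOn_Ioi_rpow_of_lt (by linarith) one_pos).const_mul C
    calc (∫⁻ t in Set.Ioi (1:ℝ), P {a | t < D a} * ENNReal.ofReal (t ^ (p - 1)))
        ≤ ∫⁻ t in Set.Ioi (1:ℝ), ENNReal.ofReal (C * t ^ (p - 1 - q)) := by
          apply lintegral_mono_ae
          filter_upwards [ae_restrict_mem measurableSet_Ioi] with t ht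
          have ht1 : (1:ℝ) ≤ t := le_of_lt ht
          have ht0 : (0:ℝ) < t := lt_of_lt_of_le one_pos ht1
          have h1 : P {a | t < D a} ≤ ENNReal.ofReal (C * t ^ (-q)) := by
            rw [ENNReal.le_ofReal_iff_toReal_le (measure_ne_top _ _) (by positivity)]
            exact htail t ht1
          calc P {a | t < D a} * ENNReal.ofReal (t ^ (p - 1))
              ≤ ENNReal.ofReal (C * t ^ (-q)) * ENNReal.ofReal (t ^ (p - 1)) :=
                mul_le_mul_left h1 _
            _ = ENNReal.ofReal (C * t ^ (-q) * t ^ (p - 1)) :=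
                (ENNReal.ofReal_mul (by positivity)).symm
            _ = ENNReal.ofReal (C * t ^ (p - 1 - q)) := by
                rw [mul_assoc, ← Real.rpow_add ht0]; ring_nf
      _ < ⊤ := hInt.lintegral_lt_top

/-- If `D₁, D₂` are i.i.d. nonnegative with regularly varying tail of index
`γ ∈ (1,2)` and mean `μ`, then for every `ε > 0`,
`n^{γ-ε} · (E[D₁D₂]/(μn) - 1 + E[exp(-D₁D₂/(μn))]) → 0`. -/
theorem tauberian_estimate_for_products
    {Ω : Type*} [MeasurableSpace Ω] (P : Measure Ω) [IsProbabilityMeasure P]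
    (D₁ D₂ : Ω → ℝ) (h1 : Measurable D₁) (h2 : Measurable D₂)
    (hnn1 : ∀ ω, 0 ≤ D₁ ω) (hnn2 : ∀ ω, 0 ≤ D₂ ω)
    (hindep : IndepFun D₁ D₂ P)
    (hid : Measure.map D₁ P = Measure.map D₂ P)
    (hint1 : Integrable D₁ P) (hint2 : Integrable D₂ P)
    (L : ℝ → ℝ) (hLpos : ∀ t : ℝ, 0 < t → 0 < L t) (hSV : SlowlyVarying L)
    (γ : ℝ) (hγ1 : 1 < γ) (hγ2 : γ < 2)
    (htail : ∀ t : ℝ, 0 < t → (P {ω | t < D₁ ω}).toReal = L t * t ^ (-γ))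
    (μ : ℝ) (hμ : μ = ∫ ω, D₁ ω ∂P) (hμpos : 0 < μ)
    (ε : ℝ) (hε : 0 < ε) :
    Tendsto (fun n : ℕ => (n : ℝ) ^ (γ - ε) *
        ((∫ ω, D₁ ω * D₂ ω ∂P) / (μ * n) - 1 +
          ∫ ω, Real.exp (-(D₁ ω * D₂ ω) / (μ * n)) ∂P))
      atTop (nhds 0) := by
  -- parameters
  set ε₁ : ℝ := min ε (γ - 1) / 4 with hε₁def
  have hε₁pos : 0 < ε₁ := by
    have : 0 < min ε (γ - 1) := lt_min hε (by linarith)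
    simp only [hε₁def]; linarith
  have hε₁a : ε₁ ≤ ε / 4 := by
    have := min_le_left ε (γ - 1); simp only [hε₁def]; linarith
  have hε₁b : ε₁ ≤ (γ - 1) / 4 := by
    have := min_le_right ε (γ - 1); simp only [hε₁def]; linarith
  set p : ℝ := γ - 2 * ε₁ with hpdef
  set q : ℝ := γ - ε₁ with hqdef
  have hp1 : 1 < p := by simp only [hpdef]; linarith
  have hp2 : p ≤ 2 := by simp only [hpdef]; nlinarith
  have hq1 : 1 < q := by simp only [hqdef]; linarith
  have hpq : p < q := by simp only [hpdef, hqdef]; linarith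
  have hεp : γ - ε < p := by simp only [hpdef]; linarith
  -- the tail bound
  have hTanti : Antitone fun t => (P {ω | t < D₁ ω}).toReal := by
    intro s t hst
    apply ENNReal.toReal_mono (measure_ne_top _ _)
    apply measure_mono
    intro ω hω
    exact lt_of_le_of_lt hst hω
  have hT1 : ∀ t : ℝ, (P {ω | t < D₁ ω}).toReal ≤ 1 := by
    intro t
    have := prob_le_one (μ := P) (s := {ω | t < D₁ ω})
    simpa using ENNReal.toReal_mono (by simp) this
  obtain ⟨C, hCpos, hC⟩ := tail_rpow_bound (fun t => (P {ω | t < D₁ ω}).toReal) L γ ε₁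
    (by linarith) hε₁pos (by linarith) hT1 hTanti htail hLpos (hSV 2 two_pos)
  have hCq : ∀ t : ℝ, 1 ≤ t → (P {ω | t < D₁ ω}).toReal ≤ C * t ^ (-q) := by
    intro t ht; simpa [hqdef] using hC t ht
  -- moments
  have hMint : Integrable (fun ω => D₁ ω ^ p) P :=
    integrable_rpow_of_tailbound P D₁ h1 hnn1 C q p hq1 hp1.le hpq hCq
  set M : ℝ := ∫ ω, D₁ ω ^ p ∂P with hMdef
  have hmeas_rpow : Measurable fun x : ℝ => x ^ p :=
    (Real.continuous_rpow_const (by linarith)).measurable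
  have h2int : Integrable (fun ω => D₂ ω ^ p) P := by
    have hmap : Integrable (fun x : ℝ => x ^ p) (Measure.map D₂ P) := by
      rw [← hid]
      exact (integrable_map_measure hmeas_rpow.aestronglyMeasurable h1.aemeasurable).mpr hMint
    exact (integrable_map_measure hmeas_rpow.aestronglyMeasurable h2.aemeasurable).mp hmap
  have h2eq : ∫ ω, D₂ ω ^ p ∂P = M := by
    have e1 : ∫ x, x ^ p ∂(Measure.map D₂ P) = ∫ ω, D₂ ω ^ p ∂P :=
      integral_map h2.aemeasurable hmeas_rpow.aestronglyMeasurable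
    have e2 : ∫ x, x ^ p ∂(Measure.map D₁ P) = ∫ ω, D₁ ω ^ p ∂P :=
      integral_map h1.aemeasurable hmeas_rpow.aestronglyMeasurable
    rw [hMdef, ← e1, ← hid, e2]
  have hprod_indep : IndepFun (fun ω => D₁ ω ^ p) (fun ω => D₂ ω ^ p) P :=
    hindep.comp hmeas_rpow hmeas_rpow
  have hprodint : Integrable (fun ω => D₁ ω ^ p * D₂ ω ^ p) P :=
    hprod_indep.integrable_mul hMint h2int
  have hprodval : ∫ ω, D₁ ω ^ p * D₂ ω ^ p ∂P = M * M := by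
    have hh := hprod_indep.integral_mul_eq_mul_integral hMint.aestronglyMeasurable h2int.aestronglyMeasurable
    simp only [Pi.mul_apply] at hh
    rw [hh, h2eq]
  have hXint : Integrable (fun ω => D₁ ω * D₂ ω) P := hindep.integrable_mul hint1 hint2
  -- bounds for n ≥ 1
  have main : ∀ n : ℕ, 1 ≤ n →
      0 ≤ (n : ℝ) ^ (γ - ε) *
        ((∫ ω, D₁ ω * D₂ ω ∂P) / (μ * n) - 1 +
          ∫ ω, Real.exp (-(D₁ ω * D₂ ω) / (μ * n)) ∂P) ∧
      (n : ℝ) ^ (γ - ε) *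
        ((∫ ω, D₁ ω * D₂ ω ∂P) / (μ * n) - 1 +
          ∫ ω, Real.exp (-(D₁ ω * D₂ ω) / (μ * n)) ∂P) ≤
        (M * M / μ ^ p) * (n : ℝ) ^ (γ - ε - p) := by
    intro n hn
    have hn0 : (0:ℝ) < n := by exact_mod_cast hn
    set t : ℝ := μ * n with htdef
    have ht0 : 0 < t := by positivity
    have hexpint : Integrable (fun ω => Real.exp (-(D₁ ω * D₂ ω) / t)) P := by
      refine Integrable.mono' (integrable_const (1:ℝ))
        ((((h1.mul h2).neg).div_const t).exp).aestronglyMeasurable ?_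
      refine Eventually.of_forall fun ω => ?_
      rw [Real.norm_eq_abs, Real.abs_exp]
      have hle : -(D₁ ω * D₂ ω) / t ≤ 0 := by
        rw [neg_div]
        exact neg_nonpos.mpr (div_nonneg (mul_nonneg (hnn1 ω) (hnn2 ω)) ht0.le)
      calc Real.exp (-(D₁ ω * D₂ ω) / t) ≤ Real.exp 0 := Real.exp_le_exp.mpr hle
        _ = 1 := Real.exp_zero
    have hAform : (∫ ω, D₁ ω * D₂ ω ∂P) / t - 1 +
          (∫ ω, Real.exp (-(D₁ ω * D₂ ω) / t) ∂P)
        = ∫ ω, ((D₁ ω * D₂ ω) / t - 1 + Real.exp (-(D₁ ω * D₂ ω) / t)) ∂P := by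
      have hf2 : Integrable (fun ω => (D₁ ω * D₂ ω) / t) P := hXint.div_const t
      have hf1 : Integrable (fun ω => (D₁ ω * D₂ ω) / t - 1) P :=
        hf2.sub (integrable_const 1)
      rw [integral_add hf1 hexpint, integral_sub hf2 (integrable_const 1), integral_div]
      simp
    have hA0 : 0 ≤ (∫ ω, D₁ ω * D₂ ω ∂P) / t - 1 +
        (∫ ω, Real.exp (-(D₁ ω * D₂ ω) / t) ∂P) := by
      rw [hAform]
      apply integral_nonneg
      intro ω
      show 0 ≤ D₁ ω * D₂ ω / t - 1 + Real.exp (-(D₁ ω * D₂ ω) / t)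
      have h := exp_term_nonneg ((D₁ ω * D₂ ω) / t)
      rw [neg_div]
      exact h
    have hfun : (fun ω => ((D₁ ω * D₂ ω) / t) ^ p)
        = fun ω => (D₁ ω ^ p * D₂ ω ^ p) / t ^ p := by
      funext ω
      rw [Real.div_rpow (mul_nonneg (hnn1 ω) (hnn2 ω)) ht0.le,
        Real.mul_rpow (hnn1 ω) (hnn2 ω)]
    have hRint : Integrable (fun ω => ((D₁ ω * D₂ ω) / t) ^ p) P := by
      rw [hfun]; exact hprodint.div_const _
    have hAle : (∫ ω, D₁ ω * D₂ ω ∂P) / t - 1 +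
          (∫ ω, Real.exp (-(D₁ ω * D₂ ω) / t) ∂P) ≤ (M * M) / t ^ p := by
      rw [hAform]
      have step : ∫ ω, ((D₁ ω * D₂ ω) / t - 1 + Real.exp (-(D₁ ω * D₂ ω) / t)) ∂P
          ≤ ∫ ω, ((D₁ ω * D₂ ω) / t) ^ p ∂P := by
        have hf2 : Integrable (fun ω => (D₁ ω * D₂ ω) / t) P := hXint.div_const t
        have hf1 : Integrable (fun ω => (D₁ ω * D₂ ω) / t - 1) P :=
          hf2.sub (integrable_const 1)
        apply integral_mono (hf1.add hexpint) hRint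
        intro ω
        show D₁ ω * D₂ ω / t - 1 + Real.exp (-(D₁ ω * D₂ ω) / t)
          ≤ (D₁ ω * D₂ ω / t) ^ p
        have hy : 0 ≤ (D₁ ω * D₂ ω) / t :=
          div_nonneg (mul_nonneg (hnn1 ω) (hnn2 ω)) ht0.le
        have h := exp_term_le_rpow ((D₁ ω * D₂ ω) / t) p hy hp1.le hp2
        rw [neg_div]
        exact h
      have hval : ∫ ω, ((D₁ ω * D₂ ω) / t) ^ p ∂P = (M * M) / t ^ p := by
        rw [hfun, integral_div, hprodval]
      rw [← hval]
      exact step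
    constructor
    · exact mul_nonneg (Real.rpow_nonneg hn0.le _) hA0
    · have halg : (n : ℝ) ^ (γ - ε) * ((M * M) / t ^ p)
          = (M * M / μ ^ p) * (n : ℝ) ^ (γ - ε - p) := by
        have hμp : (0:ℝ) < μ ^ p := Real.rpow_pos_of_pos hμpos p
        have hnp : (0:ℝ) < (n:ℝ) ^ p := Real.rpow_pos_of_pos hn0 p
        have habc : ∀ a b c mm : ℝ, b ≠ 0 → c ≠ 0 →
            a * (mm / (b * c)) = (mm / b) * (a / c) := by
          intro a b c mm hb hc; field_simp
        rw [htdef, Real.mul_rpow hμpos.le hn0.le, Real.rpow_sub hn0 (γ - ε) p]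
        exact habc _ _ _ _ hμp.ne' hnp.ne'
      calc (n : ℝ) ^ (γ - ε) *
            ((∫ ω, D₁ ω * D₂ ω ∂P) / t - 1 +
              ∫ ω, Real.exp (-(D₁ ω * D₂ ω) / t) ∂P)
          ≤ (n : ℝ) ^ (γ - ε) * ((M * M) / t ^ p) :=
            mul_le_mul_of_nonneg_left hAle (Real.rpow_nonneg hn0.le _)
        _ = (M * M / μ ^ p) * (n : ℝ) ^ (γ - ε - p) := halg
  -- squeeze
  have hGlim : Tendsto (fun n : ℕ => (M * M / μ ^ p) * (n : ℝ) ^ (γ - ε - p))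
      atTop (nhds 0) := by
    have h0 : (0:ℝ) < -(γ - ε - p) := by linarith
    have hbase : Tendsto (fun n : ℕ => ((n : ℝ)) ^ (γ - ε - p)) atTop (nhds 0) := by
      have := (tendsto_rpow_neg_atTop h0).comp
        (tendsto_natCast_atTop_atTop (R := ℝ))
      simpa [Function.comp_def] using this
    simpa using hbase.const_mul (M * M / μ ^ p)
  refine tendsto_of_tendsto_of_tendsto_of_le_of_le' tendsto_const_nhds hGlim ?_ ?_
  · exact eventually_atTop.mpr ⟨1, fun n hn => (main n hn).1⟩
  · exact eventually_atTop.mpr ⟨1, fun n hn => (main n hn).2⟩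
end
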